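/- arXiv:2006.08557 — 11 statements merged into one kernel-verified Lean document; each statement's English description precedes it below -/
import Mathlib

section
/- Let k be a field and P a partially ordered set. Let ((U_t), (u_s^t)) and ((V_t), (v_s^t)) be correspondence modules over P, and let (f_t)_{t∈P} be a morphism between them, i.e., each f_t ⊆ U_t × V_t is a correspondence and f_t ∘ u_s^t = v_s^t ∘ f_s for all s ≤ t in P. For t ∈ P set Im_t = Im(f_t) ⊆ V_t, and for s ≤ t set im_s^t = v_s^t ∩ (Im_s × Im_t). Then for all r ≤ s ≤ t in P: im_r^t = im_s^t ∘ im_r^s. (Consequently the image of the morphism is a correspondence submodule of V.) -/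
/-- Composition of correspondences (as sets of pairs): first `C`, then `D`. -/
def CorrComp {U V W : Type*} (C : Set (U × V)) (D : Set (V × W)) : Set (U × W) :=
  {p : U × W | ∃ v : V, (p.1, v) ∈ C ∧ (v, p.2) ∈ D}

/-- The image of a correspondence. -/
def CorrIm {U V : Type*} (C : Set (U × V)) : Set V :=
  {v : V | ∃ u : U, (u, v) ∈ C}

/-- Let `U`, `V` be correspondence modules over a poset `P` and `(f t)` a
morphism between them.  With `Im_t = Im (f t)` and `im_s^t = v_s^t ∩ (Im_s × Im_t)`, one has
`im_r^t = im_s^t ∘ im_r^s` for all `r ≤ s ≤ t`; hence the image of the morphism is a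
correspondence submodule of `V`. -/
theorem image_of_cmodule_morphism_is_submodule
    (k : Type*) [Field k] (P : Type*) [PartialOrder P]
    (U V : P → Type*)
    [∀ t, AddCommGroup (U t)] [∀ t, Module k (U t)]
    [∀ t, AddCommGroup (V t)] [∀ t, Module k (V t)]
    (u : ∀ s t : P, s ≤ t → Submodule k (U s × U t))
    (v : ∀ s t : P, s ≤ t → Submodule k (V s × V t))
    (hu_id : ∀ t : P, (u t t le_rfl : Set (U t × U t)) = {p | p.2 = p.1})
    (hv_id : ∀ t : P, (v t t le_rfl : Set (V t × V t)) = {p | p.2 = p.1})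
    (hu_comp : ∀ (r s t : P) (hrs : r ≤ s) (hst : s ≤ t),
      (u r t (hrs.trans hst) : Set (U r × U t)) = CorrComp (u r s hrs : Set (U r × U s)) (u s t hst : Set (U s × U t)))
    (hv_comp : ∀ (r s t : P) (hrs : r ≤ s) (hst : s ≤ t),
      (v r t (hrs.trans hst) : Set (V r × V t)) = CorrComp (v r s hrs : Set (V r × V s)) (v s t hst : Set (V s × V t)))
    (f : ∀ t : P, Submodule k (U t × V t))
    (hf : ∀ (s t : P) (hst : s ≤ t),
      CorrComp (u s t hst : Set (U s × U t)) (f t : Set (U t × V t)) =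
        CorrComp (f s : Set (U s × V s)) (v s t hst : Set (V s × V t)))
    -- the restricted correspondences `im_s^t`
    (im : ∀ s t : P, s ≤ t → Set (V s × V t))
    (him : ∀ (s t : P) (hst : s ≤ t),
      im s t hst = {p : V s × V t |
        p ∈ v s t hst ∧ p.1 ∈ CorrIm (f s : Set (U s × V s)) ∧
          p.2 ∈ CorrIm (f t : Set (U t × V t))}) :
    ∀ (r s t : P) (hrs : r ≤ s) (hst : s ≤ t),
      im r t (hrs.trans hst) = CorrComp (im r s hrs) (im s t hst) := by
  intro r s t hrs hst
  ext ⟨a, c⟩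
  simp only [him, CorrComp, CorrIm, Set.mem_setOf_eq]
  constructor
  · rintro ⟨hac, ⟨x, hxa⟩, ⟨z, hzc⟩⟩
    have : (a, c) ∈ CorrComp (v r s hrs : Set (V r × V s)) (v s t hst : Set (V s × V t)) := by
      rw [← hv_comp]; exact hac
    obtain ⟨b, hab, hbc⟩ := this
    have hxb : (x, b) ∈ CorrComp (f r : Set (U r × V r)) (v r s hrs : Set (V r × V s)) :=
      ⟨a, hxa, hab⟩
    rw [← hf] at hxb
    obtain ⟨y, _, hyb⟩ := hxb
    exact ⟨b, ⟨hab, ⟨x, hxa⟩, ⟨y, hyb⟩⟩, ⟨hbc, ⟨y, hyb⟩, ⟨z, hzc⟩⟩⟩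
  · rintro ⟨b, ⟨hab, ha, hb⟩, ⟨hbc, -, hc⟩⟩
    refine ⟨?_, ha, hc⟩
    have : (a, c) ∈ (v r t (hrs.trans hst) : Set (V r × V t)) := by
      rw [hv_comp r s t hrs hst]; exact ⟨b, hab, hbc⟩
    exact this
end

section
/- Let k be a field and P a partially ordered set. Let ((U_t), (u_s^t)) be a correspondence module over P, and let ((V_t), (φ_s^t)) be a persistence module over P: each φ_s^t : V_s → V_t is k-linear, φ_t^t = id, and φ_s^t ∘ φ_r^s = φ_r^t for r ≤ s ≤ t. Let (f_t)_{t∈P} be a morphism from U to V, i.e., each f_t ⊆ U_t × V_t is a correspondence and graph(φ_s^t) ∘ f_s = f_t ∘ u_s^t for all s ≤ t. For s ≤ t define the relation q̃_s^t ⊆ V_s × V_t by: (v_s, v_t) ∈ q̃_s^t iff there exist a_s ∈ Im(f_s) and a_t ∈ Im(f_t) with φ_s^t(v_s + a_s) = v_t + a_t. Then for all r ≤ s ≤ t in P: q̃_r^t = q̃_s^t ∘ q̃_r^s. (Consequently the cokernel of the morphism is a correspondence module.) -/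
/-- Let `U` be a correspondence module over a poset `P`, `V` a persistence
module over `P` (linear maps `φ_s^t`) and `(f t)` a morphism from `U` to `V`.  Define
`q̃_s^t ⊆ V_s × V_t` by `(v_s, v_t) ∈ q̃_s^t` iff there are `a_s ∈ Im (f s)` and
`a_t ∈ Im (f t)` with `φ_s^t (v_s + a_s) = v_t + a_t`.  Then `q̃_r^t = q̃_s^t ∘ q̃_r^s`
for all `r ≤ s ≤ t`; hence the cokernel of the morphism is a correspondence module. -/
theorem cokernel_of_morphism_to_pmodule_is_cmodule
    (k : Type*) [Field k] (P : Type*) [PartialOrder P]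
    (U V : P → Type*)
    [∀ t, AddCommGroup (U t)] [∀ t, Module k (U t)]
    [∀ t, AddCommGroup (V t)] [∀ t, Module k (V t)]
    (u : ∀ s t : P, s ≤ t → Submodule k (U s × U t))
    (hu_id : ∀ t : P, (u t t le_rfl : Set (U t × U t)) = {p | p.2 = p.1})
    (hu_comp : ∀ (r s t : P) (hrs : r ≤ s) (hst : s ≤ t),
      (u r t (hrs.trans hst) : Set (U r × U t)) =
        CorrComp (u r s hrs : Set (U r × U s)) (u s t hst : Set (U s × U t)))
    (φ : ∀ s t : P, s ≤ t → (V s →ₗ[k] V t))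
    (hφ_id : ∀ t : P, φ t t le_rfl = LinearMap.id)
    (hφ_comp : ∀ (r s t : P) (hrs : r ≤ s) (hst : s ≤ t),
      (φ s t hst).comp (φ r s hrs) = φ r t (hrs.trans hst))
    (f : ∀ t : P, Submodule k (U t × V t))
    (hf : ∀ (s t : P) (hst : s ≤ t),
      CorrComp (f s : Set (U s × V s)) (LinearMap.graph (φ s t hst) : Set (V s × V t)) =
        CorrComp (u s t hst : Set (U s × U t)) (f t : Set (U t × V t)))
    -- the relations `q̃_s^t` descending to the cokernels
    (q : ∀ s t : P, s ≤ t → Set (V s × V t))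
    (hq : ∀ (s t : P) (hst : s ≤ t),
      q s t hst = {p : V s × V t |
        ∃ a ∈ CorrIm (f s : Set (U s × V s)), ∃ b ∈ CorrIm (f t : Set (U t × V t)),
          φ s t hst (p.1 + a) = p.2 + b}) :
    ∀ (r s t : P) (hrs : r ≤ s) (hst : s ≤ t),
      q r t (hrs.trans hst) = CorrComp (q r s hrs) (q s t hst) := by
  intro r s t hrs hst
  have hIm0 : ∀ t : P, (0:V t) ∈ CorrIm (f t : Set (U t × V t)) := fun t => ⟨0, (f t).zero_mem⟩
  have hImadd : ∀ (t : P) (a b : V t), a ∈ CorrIm (f t : Set (U t × V t)) →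
      b ∈ CorrIm (f t : Set (U t × V t)) → a + b ∈ CorrIm (f t : Set (U t × V t)) := by
    rintro t a b ⟨x, hx⟩ ⟨y, hy⟩; exact ⟨x + y, (f t).add_mem hx hy⟩
  have hImsub : ∀ (t : P) (a b : V t), a ∈ CorrIm (f t : Set (U t × V t)) →
      b ∈ CorrIm (f t : Set (U t × V t)) → a - b ∈ CorrIm (f t : Set (U t × V t)) := by
    rintro t a b ⟨x, hx⟩ ⟨y, hy⟩; exact ⟨x - y, (f t).sub_mem hx hy⟩
  have hφIm : ∀ (s t : P) (hst : s ≤ t) (a : V s), a ∈ CorrIm (f s : Set (U s × V s)) →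
      φ s t hst a ∈ CorrIm (f t : Set (U t × V t)) := by
    rintro s t hst a ⟨x, hx⟩
    have hmem : (x, φ s t hst a) ∈
        CorrComp (f s : Set (U s × V s)) (LinearMap.graph (φ s t hst) : Set (V s × V t)) :=
      ⟨a, hx, by simp [LinearMap.mem_graph_iff]⟩
    rw [hf] at hmem
    obtain ⟨y, -, hy⟩ := hmem
    exact ⟨y, hy⟩
  ext ⟨vr, vt⟩
  simp only [hq, CorrComp, Set.mem_setOf_eq]
  constructor
  · rintro ⟨a, ha, b, hb, h⟩
    refine ⟨φ r s hrs (vr + a), ⟨a, ha, 0, hIm0 s, by simp⟩, 0, hIm0 s, b, hb, ?_⟩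
    have hc := DFunLike.congr_fun (hφ_comp r s t hrs hst) (vr + a)
    simp only [LinearMap.comp_apply] at hc
    rw [add_zero, hc, h]
  · rintro ⟨vs, ⟨a, ha, b, hb, h1⟩, c, hc, d, hd, h2⟩
    refine ⟨a, ha, d + φ s t hst (b - c),
      hImadd t _ _ hd (hφIm s t hst _ (hImsub s b c hb hc)), ?_⟩
    have hc' := DFunLike.congr_fun (hφ_comp r s t hrs hst) (vr + a)
    simp only [LinearMap.comp_apply] at hc'
    rw [← hc', h1, show vs + b = (vs + c) + (b - c) by abel, map_add, h2]
    abel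
end

section
/- Let k be a field and V a correspondence module over (ℝ, ≤). Let I ⊆ ℝ be an interval and I = ⋃_{λ∈Λ} I_λ a connected covering of I by intervals I_λ ⊆ I. Suppose s_λ is a section of V over I_λ for each λ, and these sections agree on overlaps: s_λ(t) = s_μ(t) for all λ, μ ∈ Λ and all t ∈ I_λ ∩ I_μ. Then there exists a section s of V over I with s(t) = s_λ(t) for all λ ∈ Λ and t ∈ I_λ. (Connective gluing: the presheaf of sections of a c-module is a persistence sheaf.) -/
/-- A family of sets is a connected covering (of its union) if for every partition of the
index set into two nonempty pieces, the corresponding unions intersect. -/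
def ConnectedFamily {α Λ : Type*} (S : Λ → Set α) : Prop :=
  ∀ Λ₀ Λ₁ : Set Λ, Λ₀ ∪ Λ₁ = Set.univ → Λ₀ ∩ Λ₁ = ∅ → Λ₀.Nonempty → Λ₁.Nonempty →
    ((⋃ l ∈ Λ₀, S l) ∩ ⋃ l ∈ Λ₁, S l).Nonempty

/-- connective gluing: Let `V` be a correspondence module over `(ℝ, ≤)`, `I` an
interval and `I = ⋃ λ, I λ` a connected covering of `I` by intervals.  If `s λ` is a section
of `V` over `I λ` for each `λ` and these sections agree on overlaps, then there is a section
`s` of `V` over `I` restricting to `s λ` on each `I λ`. -/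
theorem cmodule_sections_connective_gluing
    (k : Type*) [Field k] (V : ℝ → Type*)
    [∀ t, AddCommGroup (V t)] [∀ t, Module k (V t)]
    (v : ∀ s t : ℝ, s ≤ t → Submodule k (V s × V t))
    (hv_id : ∀ t : ℝ, (v t t le_rfl : Set (V t × V t)) = {p | p.2 = p.1})
    (hv_comp : ∀ (r s t : ℝ) (hrs : r ≤ s) (hst : s ≤ t),
      (v r t (hrs.trans hst) : Set (V r × V t)) =
        CorrComp (v r s hrs : Set (V r × V s)) (v s t hst : Set (V s × V t)))
    (Λ : Type*) (I : Set ℝ) (J : Λ → Set ℝ)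
    (hI : I.OrdConnected) (hJ : ∀ l, (J l).OrdConnected)
    (hcover : (⋃ l, J l) = I)
    (hconn : ConnectedFamily J)
    (s : ∀ l : Λ, ∀ t : ℝ, V t)
    (hsec : ∀ l : Λ, ∀ r ∈ J l, ∀ t ∈ J l, ∀ hrt : r ≤ t, (s l r, s l t) ∈ v r t hrt)
    (hagree : ∀ l m : Λ, ∀ t ∈ J l ∩ J m, s l t = s m t) :
    ∃ g : ∀ t : ℝ, V t,
      (∀ r ∈ I, ∀ t ∈ I, ∀ hrt : r ≤ t, (g r, g t) ∈ v r t hrt) ∧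
      ∀ l : Λ, ∀ t ∈ J l, g t = s l t := by
  classical
  -- define the candidate glued section
  let g : ∀ t : ℝ, V t := fun t => if h : ∃ l, t ∈ J l then s h.choose t else 0
  have hgJ : ∀ l : Λ, ∀ t ∈ J l, g t = s l t := by
    intro l t ht
    have h : ∃ l, t ∈ J l := ⟨l, ht⟩
    show (if h : ∃ l, t ∈ J l then s h.choose t else 0) = s l t
    rw [dif_pos h]
    exact hagree h.choose l t ⟨h.choose_spec, ht⟩
  -- the section property over a set
  let Sec : Set ℝ → Prop := fun A =>
    ∀ r ∈ A, ∀ t ∈ A, ∀ hrt : r ≤ t, (g r, g t) ∈ v r t hrt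
  -- pairwise gluing for ord-connected sets with nonempty intersection
  have glue : ∀ A B : Set ℝ, A.OrdConnected → B.OrdConnected → (A ∩ B).Nonempty →
      Sec A → Sec B → Sec (A ∪ B) := by
    intro A B hA hB ⟨u, huA, huB⟩ hSA hSB
    have key : ∀ r, r ∈ A → ∀ t, t ∈ B → ∀ hrt : r ≤ t, (g r, g t) ∈ v r t hrt := by
      intro r hr t ht hrt
      rcases le_total u r with hur | hru
      · -- r ∈ B as well
        exact hSB r (hB.out huB ht ⟨hur, hrt⟩) t ht hrt
      · rcases le_total t u with htu | hut
        · -- t ∈ A as well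
          exact hSA r hr t (hA.out hr huA ⟨hrt, htu⟩) hrt
        · -- compose through u
          have h1 : (g r, g u) ∈ v r u hru := hSA r hr u huA hru
          have h2 : (g u, g t) ∈ v u t hut := hSB u huB t ht hut
          have : (g r, g t) ∈ (v r t (hru.trans hut) : Set (V r × V t)) := by
            rw [hv_comp r u t hru hut]
            exact ⟨g u, h1, h2⟩
          exact this
    intro r hr t ht hrt
    rcases hr with hr | hr
    · rcases ht with ht | ht
      · exact hSA r hr t ht hrt
      · exact key r hr t ht hrt
    · rcases ht with ht | ht
      · -- r ∈ B, t ∈ A : symmetric argument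
        rcases le_total r u with hru | hur
        · rcases le_total u t with hut | htu
          · have h1 : (g r, g u) ∈ v r u hru := hSB r hr u huB hru
            have h2 : (g u, g t) ∈ v u t hut := hSA u huA t ht hut
            have : (g r, g t) ∈ (v r t (hru.trans hut) : Set (V r × V t)) := by
              rw [hv_comp r u t hru hut]
              exact ⟨g u, h1, h2⟩
            exact this
          · exact hSB r hr t (hB.out hr huB ⟨hrt, htu⟩) hrt
        · exact hSA r (hA.out huA ht ⟨hur, hrt⟩) t ht hrt
      · exact hSB r hr t ht hrt
  -- union of two overlapping ord-connected sets is ord-connected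
  have ordu : ∀ A B : Set ℝ, A.OrdConnected → B.OrdConnected → (A ∩ B).Nonempty →
      (A ∪ B).OrdConnected := by
    intro A B hA hB ⟨u, huA, huB⟩
    constructor
    intro x hx y hy z hz
    obtain ⟨hxz, hzy⟩ := hz
    rcases hx with hx | hx <;> rcases hy with hy | hy
    · exact Or.inl (hA.out hx hy ⟨hxz, hzy⟩)
    · rcases le_total z u with hzu | huz
      · rcases le_total x u with hxu | hux
        · exact Or.inl (hA.out hx huA ⟨hxz, hzu⟩)
        · exact Or.inr (hB.out (hB.out huB hy ⟨hux, hxz.trans hzy⟩) hy ⟨hxz, hzy⟩)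
      · exact Or.inr (hB.out huB hy ⟨huz, hzy⟩)
    · rcases le_total z u with hzu | huz
      · exact Or.inr (hB.out hx huB ⟨hxz, hzu⟩)
      · exact Or.inl (hA.out huA hy ⟨huz, hzy⟩)
    · exact Or.inr (hB.out hx hy ⟨hxz, hzy⟩)
  -- the union over a set of indices
  let U : Set Λ → Set ℝ := fun L => ⋃ l ∈ L, J l
  -- handle the case of an empty index type
  rcases isEmpty_or_nonempty Λ with hΛ | hΛ
  · have hIempty : I = ∅ := by
      rw [← hcover]; exact Set.iUnion_of_empty J
    refine ⟨g, ?_, ?_⟩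
    · intro r hr; rw [hIempty] at hr; exact absurd hr (Set.notMem_empty r)
    · intro l; exact (hΛ.false l).elim
  obtain ⟨l₀⟩ := hΛ
  -- Zorn's lemma on admissible index sets
  have hU_mono : ∀ L₁ L₂ : Set Λ, L₁ ⊆ L₂ → U L₁ ⊆ U L₂ := by
    intro L₁ L₂ h x hx
    rcases Set.mem_iUnion₂.1 hx with ⟨l, hl, hxl⟩
    exact Set.mem_iUnion₂.2 ⟨l, h hl, hxl⟩
  have hUsU : ∀ c : Set (Set Λ), U (⋃₀ c) = ⋃ L ∈ c, U L := by
    intro c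
    ext a
    constructor
    · intro ha
      rcases Set.mem_iUnion₂.1 ha with ⟨l, hl, hal⟩
      rcases hl with ⟨L, hLc, hlL⟩
      exact Set.mem_iUnion₂.2 ⟨L, hLc, Set.mem_iUnion₂.2 ⟨l, hlL, hal⟩⟩
    · intro ha
      rcases Set.mem_iUnion₂.1 ha with ⟨L, hLc, haL⟩
      rcases Set.mem_iUnion₂.1 haL with ⟨l, hlL, hal⟩
      exact Set.mem_iUnion₂.2 ⟨l, ⟨L, hLc, hlL⟩, hal⟩
  let S : Set (Set Λ) := {L | (U L).OrdConnected ∧ Sec (U L)}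
  have hsingle : ∀ l : Λ, ({l} : Set Λ) ∈ S := by
    intro l
    have hUeq : U ({l} : Set Λ) = J l := by simp [U]
    constructor
    · rw [hUeq]; exact hJ l
    · rw [hUeq]
      intro r hr t ht hrt
      rw [hgJ l r hr, hgJ l t ht]
      exact hsec l r hr t ht hrt
  obtain ⟨M, hl₀M, hMS, hMmax⟩ :
      ∃ M, ({l₀} : Set Λ) ⊆ M ∧ Maximal (· ∈ S) M := by
    refine zorn_subset_nonempty S ?_ {l₀} (hsingle l₀)
    intro c hcS hchain ⟨L₀, hL₀⟩
    refine ⟨⋃₀ c, ⟨?_, ?_⟩, fun L hL => Set.subset_sUnion_of_mem hL⟩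
    · constructor
      intro x hx y hy z hz
      have hUeq : U (⋃₀ c) = ⋃ L ∈ c, U L := hUsU c
      rw [hUeq] at hx hy ⊢
      rcases Set.mem_iUnion₂.1 hx with ⟨L₁, hL₁, hx₁⟩
      rcases Set.mem_iUnion₂.1 hy with ⟨L₂, hL₂, hy₂⟩
      rcases hchain.total hL₁ hL₂ with h12 | h21
      · exact Set.mem_iUnion₂.2 ⟨L₂, hL₂,
          (hcS hL₂).1.out (hU_mono _ _ h12 hx₁) hy₂ hz⟩
      · exact Set.mem_iUnion₂.2 ⟨L₁, hL₁,
          (hcS hL₁).1.out hx₁ (hU_mono _ _ h21 hy₂) hz⟩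
    · intro r hr t ht hrt
      have hUeq : U (⋃₀ c) = ⋃ L ∈ c, U L := hUsU c
      rw [hUeq] at hr ht
      rcases Set.mem_iUnion₂.1 hr with ⟨L₁, hL₁, hr₁⟩
      rcases Set.mem_iUnion₂.1 ht with ⟨L₂, hL₂, ht₂⟩
      rcases hchain.total hL₁ hL₂ with h12 | h21
      · exact (hcS hL₂).2 r (hU_mono _ _ h12 hr₁) t ht₂ hrt
      · exact (hcS hL₁).2 r hr₁ t (hU_mono _ _ h21 ht₂) hrt
  -- the maximal admissible set is everything
  have hMuniv : M = Set.univ := by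
    by_contra hne
    have hMc : Mᶜ.Nonempty := by
      rcases Set.ne_univ_iff_exists_notMem M |>.1 hne with ⟨m, hm⟩
      exact ⟨m, hm⟩
    obtain ⟨u, huM, huMc⟩ := hconn M Mᶜ (Set.union_compl_self M)
      (Set.inter_compl_self M) ⟨l₀, hl₀M rfl⟩ hMc
    rcases Set.mem_iUnion₂.1 huMc with ⟨m, hmMc, hum⟩
    have hnew : (M ∪ {m}) ∈ S := by
      have hUeq : U (M ∪ {m}) = U M ∪ J m := by
        simp only [U, Set.biUnion_union]
        congr 1
        simp
      have hinter : (U M ∩ J m).Nonempty := ⟨u, huM, hum⟩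
      constructor
      · rw [hUeq]
        exact ordu (U M) (J m) hMS.1 (hJ m) hinter
      · rw [hUeq]; exact glue (U M) (J m) hMS.1 (hJ m) hinter hMS.2
          (fun r hr t ht hrt => by
            rw [hgJ m r hr, hgJ m t ht]; exact hsec m r hr t ht hrt)
    have := hMmax hnew Set.subset_union_left
    exact hmMc (this (Set.mem_union_right M rfl))
  -- conclude
  have hUI : U Set.univ = I := by
    rw [← hcover]; simp [U]
  refine ⟨g, ?_, hgJ⟩
  have := hMS.2
  rw [hMuniv, hUI] at this
  exact this
end

section
/- Let k be a field and V a virtually tame correspondence module over (ℝ, ≤). Then for any set A ⊆ ℝ, every section of V over A extends to a section over an interval containing A: there exist an order-connected set I ⊆ ℝ with A ⊆ I and a section g of V over I with g(t) = f(t) for all t ∈ A, where f is the given section over A. -/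
/-- A chain of sets is stable (eventually constant). -/
def EvConst {α : Type*} (c : ℕ → Set α) : Prop := ∃ N : ℕ, ∀ n ≥ N, c n = c N

open Filter Topology in
lemma exists_mono_cofinal (S : Set ℝ) (hne : S.Nonempty) (hb : BddAbove S) :
    ∃ u : ℕ → ℝ, Monotone u ∧ (∀ n, u n ∈ S) ∧ ∀ s ∈ S, ∃ n, s ≤ u n := by
  by_cases h : sSup S ∈ S
  · exact ⟨fun _ => sSup S, monotone_const, fun _ => h, fun s hs => ⟨0, le_csSup hb hs⟩⟩
  · obtain ⟨u, hu, hlim, hmem⟩ := exists_seq_tendsto_sSup hne hb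
    refine ⟨u, hu, hmem, fun s hs => ?_⟩
    have hlt : s < sSup S := lt_of_le_of_ne (le_csSup hb hs) (fun he => h (he ▸ hs))
    obtain ⟨n, hn⟩ := (hlim.eventually (eventually_gt_nhds hlt)).exists
    exact ⟨n, hn.le⟩

open Filter Topology in
lemma exists_anti_cofinal (S : Set ℝ) (hne : S.Nonempty) (hb : BddBelow S) :
    ∃ u : ℕ → ℝ, Antitone u ∧ (∀ n, u n ∈ S) ∧ ∀ s ∈ S, ∃ n, u n ≤ s := by
  by_cases h : sInf S ∈ S
  · exact ⟨fun _ => sInf S, antitone_const, fun _ => h, fun s hs => ⟨0, csInf_le hb hs⟩⟩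
  · obtain ⟨u, hu, hlim, hmem⟩ := exists_seq_tendsto_sInf hne hb
    refine ⟨u, hu, hmem, fun s hs => ?_⟩
    have hlt : sInf S < s := lt_of_le_of_ne (csInf_le hb hs) (fun he => h (he ▸ hs))
    obtain ⟨n, hn⟩ := (hlim.eventually (eventually_lt_nhds hlt)).exists
    exact ⟨n, hn.le⟩

section

variable {k : Type*} [Field k] (V : ℝ → Type*)
  [∀ t, AddCommGroup (V t)] [∀ t, Module k (V t)]
  (v : ∀ s t : ℝ, s ≤ t → Submodule k (V s × V t))

/-- `f` is a section of the correspondence module `(V, v)` over `A ⊆ ℝ`. -/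
def IsSection (A : Set ℝ) (f : ∀ t : ℝ, V t) : Prop :=
  ∀ r ∈ A, ∀ t ∈ A, ∀ hrt : r ≤ t, (f r, f t) ∈ v r t hrt

/-- The descending chain condition on images (at every `t ∈ ℝ`). -/
def DCConImages : Prop :=
  ∀ t : ℝ,
    (∀ (l : ℕ → ℝ) (hl : ∀ n, l n ≤ t), Antitone l →
      EvConst (fun n => {y : V t | ∃ x : V (l n), (x, y) ∈ v (l n) t (hl n)})) ∧
    (∀ (u : ℕ → ℝ) (hu : ∀ n, t ≤ u n), Monotone u →
      EvConst (fun n => {x : V t | ∃ y : V (u n), (x, y) ∈ v t (u n) (hu n)}))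

/-- The descending chain condition on kernels (at every `t ∈ ℝ`). -/
def DCConKernels : Prop :=
  ∀ t : ℝ,
    (∀ (u : ℕ → ℝ) (hu : ∀ n, t ≤ u n), Antitone u →
      EvConst (fun n => {x : V t | (x, (0 : V (u n))) ∈ v t (u n) (hu n)})) ∧
    (∀ (l : ℕ → ℝ) (hl : ∀ n, l n ≤ t), Monotone l →
      EvConst (fun n => {y : V t | ((0 : V (l n)), y) ∈ v (l n) t (hl n)}))

/-- A correspondence module is virtually tame if it satisfies the DCC on images and
on kernels at every `t ∈ ℝ`. -/
def VirtuallyTame : Prop := DCConImages V v ∧ DCConKernels V v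

lemma comp_mem
    (hv_comp : ∀ (r s t : ℝ) (hrs : r ≤ s) (hst : s ≤ t),
      (v r t (hrs.trans hst) : Set (V r × V t)) =
        CorrComp (v r s hrs : Set (V r × V s)) (v s t hst : Set (V s × V t)))
    {r s t : ℝ} (hrs : r ≤ s) (hst : s ≤ t) {x : V r} {y : V s} {z : V t}
    (h1 : (x, y) ∈ v r s hrs) (h2 : (y, z) ∈ v s t hst) :
    ∀ h : r ≤ t, (x, z) ∈ v r t h := by
  intro h
  have : (x, z) ∈ (v r t (hrs.trans hst) : Set (V r × V t)) := by
    rw [hv_comp r s t hrs hst]; exact ⟨y, h1, h2⟩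
  exact this

lemma key
    (hv_comp : ∀ (r s t : ℝ) (hrs : r ≤ s) (hst : s ≤ t),
      (v r t (hrs.trans hst) : Set (V r × V t)) =
        CorrComp (v r s hrs : Set (V r × V s)) (v s t hst : Set (V s × V t)))
    (hK : DCConKernels V v)
    (B : Set ℝ) (g : ∀ s : ℝ, V s) (hg : IsSection V v B g)
    (t a0 b0 : ℝ) (ha0 : a0 ∈ B) (hb0 : b0 ∈ B) (ha0t : a0 ≤ t) (htb0 : t ≤ b0) :
    ∃ x : V t, (∀ a ∈ B, ∀ h : a ≤ t, (g a, x) ∈ v a t h) ∧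
      (∀ b ∈ B, ∀ h : t ≤ b, (x, g b) ∈ v t b h) := by
  obtain ⟨l, hlmono, hlmem, hlcof⟩ :=
    exists_mono_cofinal {a | a ∈ B ∧ a ≤ t} ⟨a0, ha0, ha0t⟩ ⟨t, fun s hs => hs.2⟩
  obtain ⟨u, huanti, humem, hucof⟩ :=
    exists_anti_cofinal {b | b ∈ B ∧ t ≤ b} ⟨b0, hb0, htb0⟩ ⟨t, fun s hs => hs.2⟩
  have hlt : ∀ n, l n ≤ t := fun n => (hlmem n).2
  have hut : ∀ n, t ≤ u n := fun n => (humem n).2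
  have hlB : ∀ n, l n ∈ B := fun n => (hlmem n).1
  have huB : ∀ n, u n ∈ B := fun n => (humem n).1
  have hW : ∀ n, ∃ x : V t,
      (g (l n), x) ∈ v (l n) t (hlt n) ∧ (x, g (u n)) ∈ v t (u n) (hut n) := by
    intro n
    have h1 : (g (l n), g (u n)) ∈ v (l n) (u n) ((hlt n).trans (hut n)) :=
      hg _ (hlB n) _ (huB n) _
    have h2 : (g (l n), g (u n)) ∈
        CorrComp (v (l n) t (hlt n) : Set (V (l n) × V t))
          (v t (u n) (hut n) : Set (V t × V (u n))) := by
      rw [← hv_comp (l n) t (u n) (hlt n) (hut n)]; exact h1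
    exact h2
  choose w hw1 hw2 using hW
  obtain ⟨N2, hN2⟩ := (hK t).1 u hut huanti
  obtain ⟨N1, hN1⟩ := (hK t).2 l hlt hlmono
  set N := max N1 N2 with hN
  refine ⟨w N, ?_, ?_⟩
  · have hall : ∀ n, (g (l n), w N) ∈ v (l n) t (hlt n) := by
      intro n
      rcases le_or_gt n N with hn | hn
      · exact comp_mem V v hv_comp (hlmono hn) (hlt N)
          (hg _ (hlB n) _ (hlB N) (hlmono hn)) (hw1 N) (hlt n)
      · have hNn : N ≤ n := hn.le
        have hA : (g (l N), w n) ∈ v (l N) t (hlt N) :=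
          comp_mem V v hv_comp (hlmono hNn) (hlt n)
            (hg _ (hlB N) _ (hlB n) (hlmono hNn)) (hw1 n) (hlt N)
        have hB' : (g (l N), w N) ∈ v (l N) t (hlt N) := hw1 N
        have hdiff : ((0 : V (l N)), w N - w n) ∈ v (l N) t (hlt N) := by
          have := (v (l N) t (hlt N)).sub_mem hB' hA
          simpa using this
        have e1 : {y : V t | ((0 : V (l N)), y) ∈ v (l N) t (hlt N)} =
            {y : V t | ((0 : V (l n)), y) ∈ v (l n) t (hlt n)} := by
          have hNa := hN1 N (le_max_left _ _)
          have hNb := hN1 n ((le_max_left N1 N2).trans hNn)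
          simpa using hNa.trans hNb.symm
        have hdiff' : ((0 : V (l n)), w N - w n) ∈ v (l n) t (hlt n) := by
          have hmem' : w N - w n ∈ {y : V t | ((0 : V (l N)), y) ∈ v (l N) t (hlt N)} := hdiff
          rw [e1] at hmem'; exact hmem'
        have := (v (l n) t (hlt n)).add_mem (hw1 n) hdiff'
        simpa using this
    intro a haB hat
    obtain ⟨n, hn⟩ := hlcof a ⟨haB, hat⟩
    exact comp_mem V v hv_comp hn (hlt n) (hg _ haB _ (hlB n) hn) (hall n) hat
  · have hall : ∀ n, (w N, g (u n)) ∈ v t (u n) (hut n) := by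
      intro n
      rcases le_or_gt n N with hn | hn
      · exact comp_mem V v hv_comp (hut N) (huanti hn)
          (hw2 N) (hg _ (huB N) _ (huB n) (huanti hn)) (hut n)
      · have hNn : N ≤ n := hn.le
        have hA : (w n, g (u N)) ∈ v t (u N) (hut N) :=
          comp_mem V v hv_comp (hut n) (huanti hNn)
            (hw2 n) (hg _ (huB n) _ (huB N) (huanti hNn)) (hut N)
        have hdiff : (w N - w n, (0 : V (u N))) ∈ v t (u N) (hut N) := by
          have := (v t (u N) (hut N)).sub_mem (hw2 N) hA
          simpa using this
        have e1 : {x : V t | (x, (0 : V (u N))) ∈ v t (u N) (hut N)} =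
            {x : V t | (x, (0 : V (u n))) ∈ v t (u n) (hut n)} := by
          have hNa := hN2 N (le_max_right _ _)
          have hNb := hN2 n ((le_max_right N1 N2).trans hNn)
          simpa using hNa.trans hNb.symm
        have hdiff' : (w N - w n, (0 : V (u n))) ∈ v t (u n) (hut n) := by
          have hmem' : w N - w n ∈ {x : V t | (x, (0 : V (u N))) ∈ v t (u N) (hut N)} := hdiff
          rw [e1] at hmem'; exact hmem'
        have := (v t (u n) (hut n)).add_mem (hw2 n) hdiff'
        simpa using this
    intro b hbB htb
    obtain ⟨n, hn⟩ := hucof b ⟨hbB, htb⟩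
    exact comp_mem V v hv_comp (hut n) hn (hall n) (hg _ (huB n) _ hbB hn) htb

/-- Every section of a virtually tame correspondence module over `(ℝ, ≤)` over a
set `A ⊆ ℝ` extends to a section over an interval (order-connected set) containing `A`. -/
theorem virtuallyTame_section_extension
    (hv_id : ∀ t : ℝ, (v t t le_rfl : Set (V t × V t)) = {p | p.2 = p.1})
    (hv_comp : ∀ (r s t : ℝ) (hrs : r ≤ s) (hst : s ≤ t),
      (v r t (hrs.trans hst) : Set (V r × V t)) =
        CorrComp (v r s hrs : Set (V r × V s)) (v s t hst : Set (V s × V t)))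
    (htame : VirtuallyTame V v)
    (A : Set ℝ) (f : ∀ t : ℝ, V t) (hf : IsSection V v A f) :
    ∃ I : Set ℝ, I.OrdConnected ∧ A ⊆ I ∧
      ∃ g : ∀ t : ℝ, V t, IsSection V v I g ∧ ∀ t ∈ A, g t = f t := by
  classical
  set I : Set ℝ := {s | ∃ a ∈ A, ∃ b ∈ A, a ≤ s ∧ s ≤ b} with hIdef
  have hAI : A ⊆ I := fun a ha => ⟨a, ha, a, ha, le_rfl, le_rfl⟩
  have hIoc : I.OrdConnected := by
    constructor
    intro x hx y hy z hz
    obtain ⟨a, haA, b, hbA, hax, _⟩ := hx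
    obtain ⟨a', _, b', hb'A, _, hyb'⟩ := hy
    exact ⟨a, haA, b', hb'A, hax.trans hz.1, hz.2.trans hyb'⟩
  set 𝒢 : Set (Set (Σ s : ℝ, V s)) :=
    {G | (∀ (s : ℝ) (x y : V s), ⟨s, x⟩ ∈ G → ⟨s, y⟩ ∈ G → x = y) ∧
         (∀ p ∈ G, p.1 ∈ I) ∧
         (∀ (s t : ℝ) (x : V s) (y : V t) (h : s ≤ t),
            ⟨s, x⟩ ∈ G → ⟨t, y⟩ ∈ G → (x, y) ∈ v s t h)} with h𝒢
  have hG0 : (fun a => (⟨a, f a⟩ : Σ s, V s)) '' A ∈ 𝒢 := by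
    refine ⟨?_, ?_, ?_⟩
    · rintro s x y ⟨a, ha, hax⟩ ⟨b, hb, hby⟩
      obtain ⟨rfl, hx2⟩ := Sigma.mk.inj_iff.mp hax
      obtain ⟨rfl, hy2⟩ := Sigma.mk.inj_iff.mp hby
      rw [← eq_of_heq hx2, ← eq_of_heq hy2]
    · rintro p ⟨a, ha, rfl⟩
      exact hAI ha
    · rintro s t x y h ⟨a, ha, hax⟩ ⟨b, hb, hby⟩
      obtain ⟨rfl, hx2⟩ := Sigma.mk.inj_iff.mp hax
      obtain ⟨rfl, hy2⟩ := Sigma.mk.inj_iff.mp hby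
      rw [← eq_of_heq hx2, ← eq_of_heq hy2]
      exact hf _ ha _ hb h
  have hchain : ∀ c ⊆ 𝒢, IsChain (· ⊆ ·) c → c.Nonempty →
      ∃ ub ∈ 𝒢, ∀ s ∈ c, s ⊆ ub := by
    intro c hc hch _
    refine ⟨⋃₀ c, ⟨?_, ?_, ?_⟩, fun s hs => Set.subset_sUnion_of_mem hs⟩
    · rintro s x y ⟨G1, hG1, hx⟩ ⟨G2, hG2, hy⟩
      rcases hch.total hG1 hG2 with h12 | h21
      · exact (hc hG2).1 s x y (h12 hx) hy
      · exact (hc hG1).1 s x y hx (h21 hy)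
    · rintro p ⟨G1, hG1, hp⟩
      exact (hc hG1).2.1 p hp
    · rintro s t x y h ⟨G1, hG1, hx⟩ ⟨G2, hG2, hy⟩
      rcases hch.total hG1 hG2 with h12 | h21
      · exact (hc hG2).2.2 s t x y h (h12 hx) hy
      · exact (hc hG1).2.2 s t x y h hx (h21 hy)
  obtain ⟨M, hG0M, hMmax⟩ := zorn_subset_nonempty 𝒢 hchain _ hG0
  have hMmem : M ∈ 𝒢 := hMmax.1
  set Bm : Set ℝ := {s : ℝ | ∃ x : V s, ⟨s, x⟩ ∈ M} with hBm
  set g : ∀ s : ℝ, V s :=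
    fun s => if h : ∃ x : V s, ⟨s, x⟩ ∈ M then h.choose else 0 with hgdef
  have hgmem : ∀ s, s ∈ Bm → (⟨s, g s⟩ : Σ s, V s) ∈ M := by
    intro s hs
    have hgs : g s = hs.choose := by simp only [hgdef]; exact dif_pos hs
    rw [hgs]; exact hs.choose_spec
  have hABm : A ⊆ Bm := fun a ha => ⟨f a, hG0M ⟨a, ha, rfl⟩⟩
  have hgsec : IsSection V v Bm g := fun r hr t ht hrt =>
    hMmem.2.2 r t (g r) (g t) hrt (hgmem r hr) (hgmem t ht)
  have hgf : ∀ a ∈ A, g a = f a := fun a ha =>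
    hMmem.1 a (g a) (f a) (hgmem a (hABm ha)) (hG0M ⟨a, ha, rfl⟩)
  have hIBm : I ⊆ Bm := by
    intro t ht
    by_contra htB
    obtain ⟨a, haA, b, hbA, hat, htb⟩ := ht
    obtain ⟨x, hx1, hx2⟩ := key V v hv_comp htame.2 Bm g hgsec t a b
      (hABm haA) (hABm hbA) hat htb
    have hxx : ∀ (r : ℝ) (z : V r) (h : r ≤ r), (z, z) ∈ v r r h := by
      intro r z h
      have hz : (z, z) ∈ (v r r le_rfl : Set (V r × V r)) := by rw [hv_id r]; exact rfl
      exact hz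
    have hM' : insert (⟨t, x⟩ : Σ s, V s) M ∈ 𝒢 := by
      refine ⟨?_, ?_, ?_⟩
      · rintro s y z (hy | hy) (hz | hz)
        · obtain ⟨rfl, hy2⟩ := Sigma.mk.inj_iff.mp hy
          obtain ⟨_, hz2⟩ := Sigma.mk.inj_iff.mp hz
          rw [eq_of_heq hy2, eq_of_heq hz2]
        · obtain ⟨rfl, _⟩ := Sigma.mk.inj_iff.mp hy
          exact absurd ⟨z, hz⟩ htB
        · obtain ⟨rfl, _⟩ := Sigma.mk.inj_iff.mp hz
          exact absurd ⟨y, hy⟩ htB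
        · exact hMmem.1 s y z hy hz
      · rintro p (hp | hp)
        · rw [hp]; exact ⟨a, haA, b, hbA, hat, htb⟩
        · exact hMmem.2.1 p hp
      · rintro s s' y y' h (hy | hy) (hy' | hy')
        · obtain ⟨rfl, hy2⟩ := Sigma.mk.inj_iff.mp hy
          obtain ⟨rfl, hy2'⟩ := Sigma.mk.inj_iff.mp hy'
          rw [eq_of_heq hy2, eq_of_heq hy2']
          exact hxx _ x h
        · obtain ⟨rfl, hy2⟩ := Sigma.mk.inj_iff.mp hy
          have hs'B : s' ∈ Bm := ⟨y', hy'⟩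
          have : y' = g s' := hMmem.1 s' y' (g s') hy' (hgmem s' hs'B)
          rw [eq_of_heq hy2, this]
          exact hx2 s' hs'B h
        · obtain ⟨rfl, hy2'⟩ := Sigma.mk.inj_iff.mp hy'
          have hsB : s ∈ Bm := ⟨y, hy⟩
          have : y = g s := hMmem.1 s y (g s) hy (hgmem s hsB)
          rw [eq_of_heq hy2', this]
          exact hx1 s hsB h
        · exact hMmem.2.2 s s' y y' h hy hy'
    have hsub : M ⊆ insert (⟨t, x⟩ : Σ s, V s) M := Set.subset_insert _ _
    have hback := hMmax.2 hM' hsub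
    exact htB ⟨x, hback (Set.mem_insert _ _)⟩
  refine ⟨I, hIoc, hAI, g, ?_, hgf⟩
  exact fun r hr t ht hrt => hgsec r (hIBm hr) t (hIBm ht) hrt


end
end

section
/- Let k be a field and V a k-vector space. Let {(F_λ⁻, F_λ⁺) : λ ∈ Λ} be a family of splittings of V that is disjoint and covers V. If for each λ ∈ Λ the subspace W_λ is a complement of F_λ⁻ in F_λ⁺ (i.e., F_λ⁻ ⊕ W_λ = F_λ⁺ internally), then V is the internal direct sum of the family {W_λ : λ ∈ Λ}. -/
section

variable {k V : Type*} [Field k] [AddCommGroup V] [Module k V] {Λ : Type*}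

/-- A family of splittings `(Fm λ, Fp λ)` (with `Fm λ ⊆ Fp λ`) is disjoint if for all
`λ ≠ μ` either `Fp λ ⊆ Fm μ` or `Fp μ ⊆ Fm λ`. -/
def DisjointSplittings (Fm Fp : Λ → Submodule k V) : Prop :=
  ∀ l m : Λ, l ≠ m → Fp l ≤ Fm m ∨ Fp m ≤ Fm l

/-- A family of splittings covers `V` if for every proper subspace `U ⊊ V` there is `λ`
with `U + Fm λ ≠ U + Fp λ`. -/
def CoversSplittings (Fm Fp : Λ → Submodule k V) : Prop :=
  ∀ U : Submodule k V, U ≠ ⊤ → ∃ l : Λ, U ⊔ Fm l ≠ U ⊔ Fp l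

/-- A family of splittings strongly covers `V` if for all subspaces `U, W` with `W ⊄ U`
there is `λ` with `U + (Fm λ ∩ W) ≠ U + (Fp λ ∩ W)`. -/
def StronglyCoversSplittings (Fm Fp : Λ → Submodule k V) : Prop :=
  ∀ U W : Submodule k V, ¬ W ≤ U → ∃ l : Λ, U ⊔ (Fm l ⊓ W) ≠ U ⊔ (Fp l ⊓ W)

/-- In a finite nonempty set of indices of a disjoint family of splittings there is a
"maximal" index `m`: every other index `n` in the set satisfies `Fp n ≤ Fm m`. -/
lemma exists_max_splitting (Fm Fp : Λ → Submodule k V)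
    (hsplit : ∀ l : Λ, Fm l ≤ Fp l) (hdisj : DisjointSplittings Fm Fp)
    (S : Finset Λ) (hS : S.Nonempty) :
    ∃ m ∈ S, ∀ n ∈ S, n ≠ m → Fp n ≤ Fm m := by
  classical
  revert hS
  induction S using Finset.induction_on with
  | empty => exact fun h => absurd h (by simp)
  | @insert a S ha ih =>
    intro _
    rcases S.eq_empty_or_nonempty with rfl | hS'
    · exact ⟨a, by simp, by simp⟩
    · obtain ⟨m, hmS, hm⟩ := ih hS'
      have ham : a ≠ m := fun h => ha (h ▸ hmS)
      rcases hdisj a m ham with h | h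
      · refine ⟨m, Finset.mem_insert_of_mem hmS, ?_⟩
        intro n hn hnm
        rcases Finset.mem_insert.mp hn with rfl | hn'
        · exact h
        · exact hm n hn' hnm
      · refine ⟨a, Finset.mem_insert_self a S, ?_⟩
        intro n hn hna
        rcases Finset.mem_insert.mp hn with rfl | hn'
        · exact absurd rfl hna
        · by_cases hnm : n = m
          · exact hnm ▸ h
          · exact (hm n hn' hnm).trans ((hsplit m).trans h)

/-- If a finite sum of elements of the `W` subspaces vanishes, then each summand
vanishes. -/
lemma sum_eq_zero_forall (Fm Fp : Λ → Submodule k V)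
    (hsplit : ∀ l : Λ, Fm l ≤ Fp l) (hdisj : DisjointSplittings Fm Fp)
    (W : Λ → Submodule k V)
    (hWdisj : ∀ l : Λ, Fm l ⊓ W l = ⊥)
    (hWsum : ∀ l : Λ, Fm l ⊔ W l = Fp l)
    (S : Finset Λ) (y : Λ → V) (hy : ∀ n ∈ S, y n ∈ W n)
    (hsum : ∑ n ∈ S, y n = 0) : ∀ n ∈ S, y n = 0 := by
  classical
  induction S using Finset.strongInduction with
  | _ S ih =>
    rcases S.eq_empty_or_nonempty with rfl | hS
    · simp
    · obtain ⟨m, hmS, hm⟩ := exists_max_splitting Fm Fp hsplit hdisj S hS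
      have hWle : ∀ l, W l ≤ Fp l := fun l => (hWsum l) ▸ le_sup_right
      have hrest : ∑ n ∈ S.erase m, y n = -(y m) :=
        eq_neg_of_add_eq_zero_left (by rw [Finset.sum_erase_add S y hmS]; exact hsum)
      have hym0 : y m = 0 := by
        have hmem : y m ∈ Fm m := by
          have : -(y m) ∈ Fm m := by
            rw [← hrest]
            exact Submodule.sum_mem _ fun n hn => by
              have hn' := Finset.mem_of_mem_erase hn
              exact hm n hn' (Finset.ne_of_mem_erase hn) (hWle n (hy n hn'))
          simpa using (Fm m).neg_mem this
        have : y m ∈ Fm m ⊓ W m := ⟨hmem, hy m hmS⟩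
        rw [hWdisj m] at this
        simpa using this
      have hsum' : ∑ n ∈ S.erase m, y n = 0 := by
        rw [hrest, hym0, neg_zero]
      intro n hn
      by_cases hnm : n = m
      · exact hnm ▸ hym0
      · exact ih (S.erase m) (Finset.erase_ssubset hmS)
          (fun p hp => hy p (Finset.mem_of_mem_erase hp)) hsum'
          n (Finset.mem_erase.mpr ⟨hnm, hn⟩)

/-- Crawley-Boevey: If `{(Fm λ, Fp λ)}` is a disjoint family of splittings
covering `V` and `W λ` is a complement of `Fm λ` in `Fp λ` for each `λ`, then `V` is the
internal direct sum of the `W λ`. -/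
theorem disjoint_covering_splittings_direct_sum
    (Fm Fp : Λ → Submodule k V)
    (hsplit : ∀ l : Λ, Fm l ≤ Fp l)
    (hdisj : DisjointSplittings Fm Fp)
    (hcov : CoversSplittings Fm Fp)
    (W : Λ → Submodule k V)
    (hWdisj : ∀ l : Λ, Fm l ⊓ W l = ⊥)
    (hWsum : ∀ l : Λ, Fm l ⊔ W l = Fp l) :
    iSupIndep W ∧ (⨆ l : Λ, W l) = ⊤ := by
  classical
  constructor
  · apply iSupIndep_of_dfinsupp_lsum_injective
    rw [injective_iff_map_eq_zero]
    intro f hf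
    have hsum : ∑ n ∈ f.support, ((f n : V)) = 0 := by
      rw [← hf]
      simp only [DFinsupp.lsum_apply_apply, DFinsupp.sumAddHom_apply]
      rfl
    have := sum_eq_zero_forall Fm Fp hsplit hdisj W hWdisj hWsum f.support
      (fun n => (f n : V)) (fun n _ => (f n).2) hsum
    ext n
    by_cases hn : n ∈ f.support
    · simpa using this n hn
    · simp_all [DFinsupp.notMem_support_iff.mp hn]
  · by_contra h
    obtain ⟨l, hl⟩ := hcov (⨆ l, W l) h
    apply hl
    have hU : (⨆ l, W l) ⊔ W l = ⨆ l, W l := sup_eq_left.mpr (le_iSup W l)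
    calc (⨆ l, W l) ⊔ Fm l = (⨆ l, W l) ⊔ W l ⊔ Fm l := by rw [hU]
      _ = (⨆ l, W l) ⊔ (Fm l ⊔ W l) := by rw [sup_assoc, sup_comm (W l) (Fm l)]
      _ = (⨆ l, W l) ⊔ Fp l := by rw [hWsum l]
end
end

section
/- Let k be a field and V a k-vector space. Let {(F_λ⁻, F_λ⁺) : λ ∈ Λ} be a family of splittings of V that is disjoint and covers V, and let {(G_σ⁻, G_σ⁺) : σ ∈ Σ} be a family of splittings of V that is disjoint and strongly covers V. Then the family of splittings {(F_λ⁻ + (G_σ⁻ ∩ F_λ⁺), F_λ⁻ + (G_σ⁺ ∩ F_λ⁺)) : (λ, σ) ∈ Λ × Σ} is disjoint and covers V. -/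
section

variable {k V : Type*} [Field k] [AddCommGroup V] [Module k V] {Λ : Type*}

/-- Crawley-Boevey: If `{(Fm λ, Fp λ)}` is disjoint and covers `V` and
`{(Gm σ, Gp σ)}` is disjoint and strongly covers `V`, then the family of splittings
`{(Fm λ + (Gm σ ∩ Fp λ), Fm λ + (Gp σ ∩ Fp λ)) : (λ, σ)}` is disjoint and covers `V`. -/
theorem refined_splittings_disjoint_and_cover
    {Sig : Type*}
    (Fm Fp : Λ → Submodule k V)
    (hFsplit : ∀ l : Λ, Fm l ≤ Fp l)
    (hFdisj : DisjointSplittings Fm Fp)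
    (hFcov : CoversSplittings Fm Fp)
    (Gm Gp : Sig → Submodule k V)
    (hGsplit : ∀ s : Sig, Gm s ≤ Gp s)
    (hGdisj : DisjointSplittings Gm Gp)
    (hGcov : StronglyCoversSplittings Gm Gp) :
    DisjointSplittings
        (fun p : Λ × Sig => Fm p.1 ⊔ (Gm p.2 ⊓ Fp p.1))
        (fun p : Λ × Sig => Fm p.1 ⊔ (Gp p.2 ⊓ Fp p.1)) ∧
      CoversSplittings
        (fun p : Λ × Sig => Fm p.1 ⊔ (Gm p.2 ⊓ Fp p.1))
        (fun p : Λ × Sig => Fm p.1 ⊔ (Gp p.2 ⊓ Fp p.1)) := by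
  constructor
  · rintro ⟨l, s⟩ ⟨m, t⟩ hne
    by_cases hlm : l = m
    · subst hlm
      have hst : s ≠ t := fun h => hne (by simp [h])
      rcases hGdisj s t hst with h | h
      · exact Or.inl (sup_le_sup_left (inf_le_inf_right _ h) _)
      · exact Or.inr (sup_le_sup_left (inf_le_inf_right _ h) _)
    · rcases hFdisj l m hlm with h | h
      · exact Or.inl ((sup_le ((hFsplit l).trans h)
          (inf_le_right.trans h)).trans le_sup_left)
      · exact Or.inr ((sup_le ((hFsplit m).trans h)
          (inf_le_right.trans h)).trans le_sup_left)
  · intro U hU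
    obtain ⟨l, hl⟩ := hFcov U hU
    have hW : ¬ Fp l ≤ U ⊔ Fm l := by
      intro h
      exact hl (le_antisymm (sup_le_sup_left (hFsplit l) U) (sup_le le_sup_left h))
    obtain ⟨s, hs⟩ := hGcov (U ⊔ Fm l) (Fp l) hW
    exact ⟨(l, s), by simpa [sup_assoc] using hs⟩

end
end

section
/- Let k be a field and V a k-vector space. Suppose {(F_λ⁻, F_λ⁺) : λ ∈ Λ} is a family of splittings of V that is disjoint and covers V, and {(G_σ⁻, G_σ⁺) : σ ∈ Σ} is a family of splittings of V that is disjoint and strongly covers V. If for each (σ, λ) ∈ Σ × Λ the subspace W_{σ,λ} is a complement of (F_λ⁻ ∩ G_σ⁺) + (G_σ⁻ ∩ F_λ⁺) in G_σ⁺ ∩ F_λ⁺, then V is the internal direct sum of the family {W_{σ,λ} : (σ, λ) ∈ Σ × Λ}. -/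
section

variable {k V : Type*} [Field k] [AddCommGroup V] [Module k V] {Λ : Type*}

/-- Auxiliary relation on pairs of indices. -/
def SplitRel {Sig : Type*} (Fm Fp : Λ → Submodule k V) (Gm Gp : Sig → Submodule k V)
    (q p : Sig × Λ) : Prop :=
  Fp q.2 ≤ Fm p.2 ∨ (q.2 = p.2 ∧ Gp q.1 ≤ Gm p.1)

/-- Auxiliary subspace: everything "strictly below" the piece at `p`. -/
def DSp {Sig : Type*} (Fm Fp : Λ → Submodule k V) (Gm : Sig → Submodule k V)
    (p : Sig × Λ) : Submodule k V :=
  Fm p.2 ⊔ (Gm p.1 ⊓ Fp p.2)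

/-- In a finite set, a transitive relation which is total on distinct elements has a
maximal element. -/
theorem exists_rel_max {α : Type*} [DecidableEq α] (r : α → α → Prop)
    (htrans : ∀ a b c, r a b → r b c → r a c)
    (htot : ∀ a b, a ≠ b → r a b ∨ r b a) :
    ∀ t : Finset α, t.Nonempty → ∃ m ∈ t, ∀ q ∈ t, q ≠ m → r q m := by
  intro t
  induction t using Finset.induction with
  | empty => rintro ⟨a, ha⟩; simp at ha
  | @insert a s ha ih =>
    intro _
    rcases s.eq_empty_or_nonempty with rfl | hs
    · refine ⟨a, Finset.mem_insert_self a _, ?_⟩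
      intro q hq hqa
      rcases Finset.mem_insert.1 hq with rfl | h
      · exact absurd rfl hqa
      · simp at h
    · obtain ⟨m, hm, hmax⟩ := ih hs
      have ham : a ≠ m := fun h => ha (h ▸ hm)
      by_cases hma : r m a
      · refine ⟨a, Finset.mem_insert_self a s, fun q hq hqa => ?_⟩
        rcases Finset.mem_insert.1 hq with rfl | h
        · exact absurd rfl hqa
        · by_cases hqm : q = m
          · subst hqm; exact hma
          · exact htrans q m a (hmax q h hqm) hma
      · have ham' : r a m := (htot a m ham).resolve_right hma
        refine ⟨m, Finset.mem_insert_of_mem hm, fun q hq hqm => ?_⟩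
        rcases Finset.mem_insert.1 hq with rfl | h
        · exact ham'
        · exact hmax q h hqm

/-- Crawley-Boevey / Corollary 5.3(i): If `{(Fm λ, Fp λ)}` is disjoint and
covers `V`, `{(Gm σ, Gp σ)}` is disjoint and strongly covers `V`, and `W (σ, λ)` is a
complement of `(Fm λ ∩ Gp σ) + (Gm σ ∩ Fp λ)` in `Gp σ ∩ Fp λ`, then `V` is the internal
direct sum of the `W (σ, λ)`. -/
theorem refined_splittings_direct_sum
    {Sig : Type*}
    (Fm Fp : Λ → Submodule k V)
    (hFsplit : ∀ l : Λ, Fm l ≤ Fp l)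
    (hFdisj : DisjointSplittings Fm Fp)
    (hFcov : CoversSplittings Fm Fp)
    (Gm Gp : Sig → Submodule k V)
    (hGsplit : ∀ s : Sig, Gm s ≤ Gp s)
    (hGdisj : DisjointSplittings Gm Gp)
    (hGcov : StronglyCoversSplittings Gm Gp)
    (W : Sig × Λ → Submodule k V)
    (hWdisj : ∀ s : Sig, ∀ l : Λ,
      ((Fm l ⊓ Gp s) ⊔ (Gm s ⊓ Fp l)) ⊓ W (s, l) = ⊥)
    (hWsum : ∀ s : Sig, ∀ l : Λ,
      ((Fm l ⊓ Gp s) ⊔ (Gm s ⊓ Fp l)) ⊔ W (s, l) = Gp s ⊓ Fp l) :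
    iSupIndep W ∧ (⨆ p : Sig × Λ, W p) = ⊤ := by
  classical
  -- basic containment
  have hWle : ∀ p : Sig × Λ, W p ≤ Gp p.1 ⊓ Fp p.2 := fun p =>
    le_sup_right.trans (hWsum p.1 p.2).le
  -- the piece is disjoint from DSp
  have hbot : ∀ p : Sig × Λ, W p ⊓ DSp Fm Fp Gm p = ⊥ := by
    rintro ⟨s, l⟩
    have h1 : W (s, l) ≤ Gp s ⊓ Fp l := hWle (s, l)
    have h2 : Gm s ⊓ Fp l ≤ Gp s ⊓ Fp l := inf_le_inf_right _ (hGsplit s)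
    have h4 : Fm l ⊓ (Gp s ⊓ Fp l) = Fm l ⊓ Gp s :=
      le_antisymm (le_inf inf_le_left (inf_le_right.trans inf_le_left))
        (le_inf inf_le_left (le_inf inf_le_right (inf_le_left.trans (hFsplit l))))
    have h3 : (Fm l ⊔ (Gm s ⊓ Fp l)) ⊓ (Gp s ⊓ Fp l)
        = (Fm l ⊓ Gp s) ⊔ (Gm s ⊓ Fp l) := by
      rw [sup_comm (Fm l) (Gm s ⊓ Fp l), sup_inf_assoc_of_le _ h2, h4, sup_comm]
    have : W (s, l) ⊓ DSp Fm Fp Gm (s, l)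
        = W (s, l) ⊓ ((Fm l ⊔ (Gm s ⊓ Fp l)) ⊓ (Gp s ⊓ Fp l)) := by
      simp only [DSp]
      rw [inf_comm (Fm l ⊔ (Gm s ⊓ Fp l)) (Gp s ⊓ Fp l), ← inf_assoc,
        inf_eq_left.2 h1]
    rw [this, h3, inf_comm]
    exact hWdisj s l
  -- transitivity of the relation
  have hrtrans : ∀ a b c : Sig × Λ,
      SplitRel Fm Fp Gm Gp a b → SplitRel Fm Fp Gm Gp b c → SplitRel Fm Fp Gm Gp a c := by
    intro a b c h1 h2
    simp only [SplitRel] at h1 h2 ⊢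
    rcases h1 with h1 | ⟨e1, h1⟩ <;> rcases h2 with h2 | ⟨e2, h2⟩
    · exact Or.inl (h1.trans ((hFsplit b.2).trans h2))
    · exact Or.inl (by rw [← e2]; exact h1)
    · exact Or.inl (by rw [e1]; exact h2)
    · exact Or.inr ⟨e1.trans e2, h1.trans ((hGsplit b.1).trans h2)⟩
  -- totality of the relation
  have hrtot : ∀ a b : Sig × Λ, a ≠ b →
      SplitRel Fm Fp Gm Gp a b ∨ SplitRel Fm Fp Gm Gp b a := by
    intro a b hab
    simp only [SplitRel]
    by_cases he : a.2 = b.2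
    · have hne : a.1 ≠ b.1 := fun h1 => hab (Prod.ext h1 he)
      rcases hGdisj a.1 b.1 hne with hg | hg
      · exact Or.inl (Or.inr ⟨he, hg⟩)
      · exact Or.inr (Or.inr ⟨he.symm, hg⟩)
    · rcases hFdisj a.2 b.2 he with hf | hf
      · exact Or.inl (Or.inl hf)
      · exact Or.inr (Or.inl hf)
  -- monotonicity: below means inside DSp
  have hWleD : ∀ q p : Sig × Λ, SplitRel Fm Fp Gm Gp q p → W q ≤ DSp Fm Fp Gm p := by
    intro q p h
    simp only [SplitRel] at h
    simp only [DSp]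
    rcases h with h | ⟨e, h⟩
    · exact (hWle q).trans (inf_le_right.trans (h.trans le_sup_left))
    · exact (hWle q).trans
        (le_sup_of_le_right (inf_le_inf h (le_of_eq (congrArg Fp e))))
  have hDleD : ∀ q p : Sig × Λ, SplitRel Fm Fp Gm Gp q p →
      DSp Fm Fp Gm q ≤ DSp Fm Fp Gm p := by
    intro q p h
    simp only [SplitRel] at h
    simp only [DSp]
    rcases h with h | ⟨e, h⟩
    · exact (sup_le (hFsplit q.2) inf_le_right).trans (h.trans le_sup_left)
    · exact sup_le ((le_of_eq (congrArg Fm e)).trans le_sup_left)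
        (le_sup_of_le_right
          (inf_le_inf ((hGsplit q.1).trans h) (le_of_eq (congrArg Fp e))))
  -- the main finite induction
  have IND : ∀ (n : ℕ) (t : Finset (Sig × Λ)), t.card ≤ n → ∀ p ∉ t,
      ∀ x, x ∈ (⨆ q ∈ t, W q) → x ∈ W p ⊔ DSp Fm Fp Gm p → x ∈ DSp Fm Fp Gm p := by
    intro n
    induction n with
    | zero =>
      intro t ht p hp x hx hx2
      have : t = ∅ := Finset.card_eq_zero.1 (Nat.le_zero.1 ht)
      subst this
      simp only [Finset.notMem_empty, iSup_false, iSup_bot, Submodule.mem_bot] at hx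
      exact hx ▸ zero_mem _
    | succ n ih =>
      intro t hcard p hp x hx hx2
      rcases t.eq_empty_or_nonempty with rfl | hne
      · simp only [Finset.notMem_empty, iSup_false, iSup_bot, Submodule.mem_bot] at hx
        exact hx ▸ zero_mem _
      · obtain ⟨m, hm, hmax⟩ := exists_rel_max (SplitRel Fm Fp Gm Gp) hrtrans hrtot
          (insert p t) ⟨p, Finset.mem_insert_self p t⟩
        rcases Finset.mem_insert.1 hm with heq | hmt
        · -- the maximal element is p itself
          have hle : (⨆ q ∈ t, W q) ≤ DSp Fm Fp Gm p := by
            refine iSup₂_le fun q hq => ?_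
            have hqp : q ≠ p := fun h => hp (h ▸ hq)
            have hqm : q ≠ m := fun h => hqp (h.trans heq)
            exact hWleD q p (heq ▸ hmax q (Finset.mem_insert_of_mem hq) hqm)
          exact hle hx
        · -- the maximal element m lies in t
          have hpm : p ≠ m := fun h => hp (h ▸ hmt)
          have hrpm : SplitRel Fm Fp Gm Gp p m :=
            hmax p (Finset.mem_insert_self p t) hpm
          have hdecomp : (⨆ q ∈ t, W q) = W m ⊔ ⨆ q ∈ t.erase m, W q := by
            conv_lhs => rw [← Finset.insert_erase hmt]
            rw [Finset.iSup_insert]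
          rw [hdecomp] at hx
          obtain ⟨y, hy, z, hz, hyz⟩ := Submodule.mem_sup.1 hx
          have hzD : z ∈ DSp Fm Fp Gm m := by
            have hle : (⨆ q ∈ t.erase m, W q) ≤ DSp Fm Fp Gm m := by
              refine iSup₂_le fun q hq => ?_
              exact hWleD q m
                (hmax q (Finset.mem_insert_of_mem (Finset.mem_of_mem_erase hq))
                  (Finset.ne_of_mem_erase hq))
            exact hle hz
          have hxDm : x ∈ DSp Fm Fp Gm m :=
            (sup_le (hWleD p m hrpm) (hDleD p m hrpm)) hx2
          have hy0 : y = 0 := by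
            have hmem : y ∈ W m ⊓ DSp Fm Fp Gm m := by
              refine ⟨hy, ?_⟩
              have : y = x - z := eq_sub_of_add_eq hyz
              rw [this]
              exact sub_mem hxDm hzD
            rw [hbot m] at hmem
            exact (Submodule.mem_bot k).1 hmem
          have hxz : x ∈ ⨆ q ∈ t.erase m, W q := by
            rw [← hyz, hy0, zero_add]; exact hz
          refine ih (t.erase m) ?_ p (fun h => hp (Finset.mem_of_mem_erase h)) x hxz hx2
          have := Finset.card_erase_of_mem hmt
          have := Finset.card_pos.2 hne
          omega
  constructor
  · -- independence
    intro i
    rw [Submodule.disjoint_def]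
    intro x hxi hxs
    obtain ⟨t, ht⟩ := Submodule.mem_iSup_iff_exists_finset.1 hxs
    have hle : (⨆ j ∈ t, ⨆ _ : j ≠ i, W j) ≤ ⨆ j ∈ t.erase i, W j := by
      refine iSup₂_le fun j hj => iSup_le fun hji => ?_
      exact le_iSup₂ (f := fun j (_ : j ∈ t.erase i) => W j) j
        (Finset.mem_erase.2 ⟨hji, hj⟩)
    have hx' : x ∈ ⨆ j ∈ t.erase i, W j := hle ht
    have hxD : x ∈ DSp Fm Fp Gm i :=
      IND (t.erase i).card (t.erase i) le_rfl i (Finset.notMem_erase i t) x hx'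
        (Submodule.mem_sup_left hxi)
    have hmem : x ∈ W i ⊓ DSp Fm Fp Gm i := ⟨hxi, hxD⟩
    rw [hbot i] at hmem
    exact (Submodule.mem_bot k).1 hmem
  · -- the sum is everything
    by_contra hneq
    obtain ⟨l, hl⟩ := hFcov (⨆ p, W p) hneq
    apply hl
    have hkey : Fp l ≤ (⨆ p, W p) ⊔ Fm l := by
      by_contra hcon
      obtain ⟨s, hs⟩ := hGcov ((⨆ p, W p) ⊔ Fm l) (Fp l) hcon
      apply hs
      refine le_antisymm
        (sup_le le_sup_left
          (le_sup_of_le_right (inf_le_inf_right _ (hGsplit s)))) ?_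
      refine sup_le le_sup_left ?_
      rw [← hWsum s l]
      refine sup_le (sup_le ?_ le_sup_right) ?_
      · exact le_sup_of_le_left (le_sup_of_le_right inf_le_left)
      · exact le_sup_of_le_left (le_sup_of_le_left (le_iSup W (s, l)))
    exact le_antisymm (sup_le le_sup_left ((hFsplit l).trans le_sup_right))
      (sup_le le_sup_left hkey)

end
end

section
/- Let A and B be sets (types), R ⊆ A × B a relation, and X ⊆ A, Y ⊆ B subsets. Suppose σ : X → B is an injective map with (x, σ(x)) ∈ R for all x ∈ X, and τ : Y → A is an injective map with (τ(y), y) ∈ R for all y ∈ Y. Then there exist a subset D with X ⊆ D ⊆ A and an injective map ζ : D → B such that (d, ζ(d)) ∈ R for all d ∈ D and Y ⊆ ζ(D). -/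
/-- Auxiliary inductive set: the elements of `Y` forced to be matched via `τ`. -/
inductive InS {A B : Type*} (X : Set A) (Y : Set B) (σ : A → B) (τ : B → A) : B → Prop
  | base (y : B) (hy : y ∈ Y) (h : y ∉ σ '' X) : InS X Y σ τ y
  | step (s : B) (hs : InS X Y σ τ s) (h1 : τ s ∈ X) (y : B) (hy : y ∈ Y)
      (h2 : σ (τ s) = y) : InS X Y σ τ y

/-- abstract matching lemma: Let `R ⊆ A × B` be a relation, `X ⊆ A`,
`Y ⊆ B`.  If `σ` is injective on `X` with `(x, σ x) ∈ R` for all `x ∈ X`, and `τ` is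
injective on `Y` with `(τ y, y) ∈ R` for all `y ∈ Y`, then there are a set `D` with
`X ⊆ D ⊆ A` and a map `ζ` injective on `D` with `(d, ζ d) ∈ R` for all `d ∈ D` and
`Y ⊆ ζ '' D`. -/
theorem matching_from_two_injections
    (A B : Type*) (R : Set (A × B)) (X : Set A) (Y : Set B)
    (σ : A → B) (hσinj : Set.InjOn σ X) (hσR : ∀ x ∈ X, (x, σ x) ∈ R)
    (τ : B → A) (hτinj : Set.InjOn τ Y) (hτR : ∀ y ∈ Y, (τ y, y) ∈ R) :
    ∃ D : Set A, X ⊆ D ∧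
      ∃ ζ : A → B, Set.InjOn ζ D ∧ (∀ d ∈ D, (d, ζ d) ∈ R) ∧ Y ⊆ ζ '' D := by
  classical
  set S : Set B := {y | InS X Y σ τ y} with hSdef
  have hSY : S ⊆ Y := by
    intro y hy
    induction hy with
    | base y hy h => exact hy
    | step s hs h1 y hy h2 ih => exact hy
  -- (b): if `x ∈ X` and `σ x ∈ S` then `x ∈ τ '' S`.
  have hb : ∀ x ∈ X, σ x ∈ S → x ∈ τ '' S := by
    intro x hx hxS
    cases hxS with
    | base _ hy h => exact absurd ⟨x, hx, rfl⟩ h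
    | step s hs h1 _ hy h2 => exact ⟨s, hs, hσinj h1 hx h2⟩
  -- (a): every `y ∈ Y \ S` is hit by some `x ∈ X \ τ '' S`.
  have ha : ∀ y ∈ Y, y ∉ S → ∃ x ∈ X, x ∉ τ '' S ∧ σ x = y := by
    intro y hy hyS
    by_cases him : y ∈ σ '' X
    · obtain ⟨x, hx, hxy⟩ := him
      refine ⟨x, hx, ?_, hxy⟩
      rintro ⟨s, hs, hsx⟩
      exact hyS (InS.step s hs (hsx ▸ hx) y hy (by rw [hsx, hxy]))
    · exact absurd (InS.base y hy him) hyS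
  set D : Set A := X ∪ τ '' S with hDdef
  set ζ : A → B := fun a => if h : ∃ y, y ∈ S ∧ τ y = a then h.choose else σ a with hζdef
  have hζτ : ∀ y ∈ S, ζ (τ y) = y := by
    intro y hy
    have h : ∃ y', y' ∈ S ∧ τ y' = τ y := ⟨y, hy, rfl⟩
    have hspec := h.choose_spec
    simp only [hζdef, dif_pos h]
    exact hτinj (hSY hspec.1) (hSY hy) hspec.2
  have hζσ : ∀ a, a ∉ τ '' S → ζ a = σ a := by
    intro a hna
    have : ¬∃ y, y ∈ S ∧ τ y = a := fun ⟨y, hy, hya⟩ => hna ⟨y, hy, hya⟩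
    simp only [hζdef, dif_neg this]
  have hζS : ∀ a ∈ τ '' S, ζ a ∈ S ∧ τ (ζ a) = a := by
    rintro a ⟨y, hy, rfl⟩
    rw [hζτ y hy]; exact ⟨hy, rfl⟩
  refine ⟨D, Set.subset_union_left, ζ, ?_, ?_, ?_⟩
  · -- injectivity on D
    intro d₁ hd₁ d₂ hd₂ heq
    by_cases h1 : d₁ ∈ τ '' S <;> by_cases h2 : d₂ ∈ τ '' S
    · obtain ⟨hy1, ht1⟩ := hζS d₁ h1
      obtain ⟨hy2, ht2⟩ := hζS d₂ h2
      rw [← ht1, ← ht2, heq]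
    · have hx2 : d₂ ∈ X := hd₂.resolve_right h2
      obtain ⟨hy1, _⟩ := hζS d₁ h1
      rw [hζσ d₂ h2] at heq
      exact absurd (hb d₂ hx2 (heq ▸ hy1)) h2
    · have hx1 : d₁ ∈ X := hd₁.resolve_right h1
      obtain ⟨hy2, _⟩ := hζS d₂ h2
      rw [hζσ d₁ h1] at heq
      exact absurd (hb d₁ hx1 (heq ▸ hy2)) h1
    · have hx1 : d₁ ∈ X := hd₁.resolve_right h1
      have hx2 : d₂ ∈ X := hd₂.resolve_right h2
      rw [hζσ d₁ h1, hζσ d₂ h2] at heq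
      exact hσinj hx1 hx2 heq
  · -- R-compatibility
    intro d hd
    by_cases h : d ∈ τ '' S
    · obtain ⟨hy, ht⟩ := hζS d h
      have := hτR (ζ d) (hSY hy)
      rwa [ht] at this
    · rw [hζσ d h]
      exact hσR d (hd.resolve_right h)
  · -- Y ⊆ ζ '' D
    intro y hy
    by_cases h : y ∈ S
    · exact ⟨τ y, Or.inr ⟨y, h, rfl⟩, hζτ y h⟩
    · obtain ⟨x, hx, hnx, hxy⟩ := ha y hy h
      exact ⟨x, Or.inl hx, by rw [hζσ x hnx, hxy]⟩
end

section
/- Let (U, T) be a 2-D persistence module over a field k, and fix m > 0 and c ∈ ℝ, with ℓ(x) = (x, c − m·x). Let a ≤ b be reals and v ∈ U_{ℓ(a)}, w ∈ U_{ℓ(b)}. Suppose v and w can be interpolated along a chain a = x₀ ≤ x₁ ≤ ⋯ ≤ x_n = b. If a = y₀ ≤ y₁ ≤ ⋯ ≤ y_p = b is another chain all of whose values occur among the values x₀, …, x_n (i.e., {y₀, …, y_p} ⊆ {x₀, …, x_n}), then v and w can be interpolated along the chain (y_j). -/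
/-- Parametrization of the negatively sloped line `y = c - m·x` in `ℝ × ℝ`. -/
def lline (m c x : ℝ) : ℝ × ℝ := (x, c - m * x)

section

variable {k : Type*} [Field k] (U : ℝ × ℝ → Type*)
  [∀ p, AddCommGroup (U p)] [∀ p, Module k (U p)]
  (T : ∀ p q : ℝ × ℝ, p ≤ q → (U p →ₗ[k] U q))
  (m c : ℝ)

/-- Transport of a vector along an equality of line parameters. -/
def castU {s t : ℝ} (h : s = t) (v : U (lline m c s)) : U (lline m c t) := by
  subst h; exact v

/-- `v` and `w` can be interpolated along the chain `x 0 ≤ x 1 ≤ ⋯ ≤ x n` on the line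
`ℓ(x) = (x, c - m·x)`: there are `w_i ∈ U (ℓ (x i))` with `w_0 = v`, `w_n = w`, and the
images of `w_i` and `w_{i+1}` in `U (ℓ (x i) ⊔ ℓ (x (i+1)))` agree for all `i < n`. -/
def InterpAlong (n : ℕ) (x : ℕ → ℝ)
    (v : U (lline m c (x 0))) (w : U (lline m c (x n))) : Prop :=
  ∃ ws : ∀ i : ℕ, U (lline m c (x i)),
    ws 0 = v ∧ ws n = w ∧
    ∀ i : ℕ, i < n →
      T (lline m c (x i)) (lline m c (x i) ⊔ lline m c (x (i + 1)))
          le_sup_left (ws i) =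
        T (lline m c (x (i + 1))) (lline m c (x i) ⊔ lline m c (x (i + 1)))
          le_sup_right (ws (i + 1))

/-- The slice correspondence: `(v, w) ∈ R_{a,b}` iff `v` and `w` can be interpolated along
every chain from `a` to `b`. -/
def SliceRel (a b : ℝ) (v : U (lline m c a)) (w : U (lline m c b)) : Prop :=
  ∀ (n : ℕ) (x : ℕ → ℝ), (∀ i : ℕ, i < n → x i ≤ x (i + 1)) →
    ∀ (hx0 : x 0 = a) (hxn : x n = b),
      InterpAlong U T m c n x (castU U m c hx0.symm v) (castU U m c hxn.symm w)

lemma castU_trans {s t u' : ℝ} (h1 : s = t) (h2 : t = u') (v : U (lline m c s)) :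
    castU U m c h2 (castU U m c h1 v) = castU U m c (h1.trans h2) v := by
  subst h1; subst h2; rfl

lemma lline_le_sup (hm : 0 < m) {s u t : ℝ} (h1 : s ≤ u) (h2 : u ≤ t) :
    lline m c u ≤ lline m c s ⊔ lline m c t := by
  refine ⟨le_sup_of_le_right h2, le_sup_of_le_left ?_⟩
  simp only [lline]
  nlinarith

end

section

variable {k : Type*} [Field k] {U : ℝ × ℝ → Type*}
  [∀ p, AddCommGroup (U p)] [∀ p, Module k (U p)]
  {T : ∀ p q : ℝ × ℝ, p ≤ q → (U p →ₗ[k] U q)}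
  {m c : ℝ}

lemma Tcomp (hcomp : ∀ (p q r : ℝ × ℝ) (hpq : p ≤ q) (hqr : q ≤ r),
      (T q r hqr).comp (T p q hpq) = T p r (hpq.trans hqr))
    {p q r : ℝ × ℝ} (h1 : p ≤ q) (h2 : q ≤ r) (u : U p) :
    T q r h2 (T p q h1 u) = T p r (h1.trans h2) u :=
  DFunLike.congr_fun (hcomp p q r h1 h2) u

lemma T_eq_castU (hid : ∀ p : ℝ × ℝ, T p p le_rfl = LinearMap.id)
    {s t : ℝ} (h : s = t) (hle : lline m c s ≤ lline m c t) (u : U (lline m c s)) :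
    T (lline m c s) (lline m c t) hle u = castU U m c h u := by
  subst h
  rw [hid]
  rfl

lemma chain_compat
    (hcomp : ∀ (p q r : ℝ × ℝ) (hpq : p ≤ q) (hqr : q ≤ r),
      (T q r hqr).comp (T p q hpq) = T p r (hpq.trans hqr))
    (hm : 0 < m) (n : ℕ) (x : ℕ → ℝ)
    (hx : ∀ i : ℕ, i < n → x i ≤ x (i + 1))
    (ws : ∀ i : ℕ, U (lline m c (x i)))
    (hstep : ∀ i : ℕ, i < n →
      T (lline m c (x i)) (lline m c (x i) ⊔ lline m c (x (i + 1)))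
          le_sup_left (ws i) =
        T (lline m c (x (i + 1))) (lline m c (x i) ⊔ lline m c (x (i + 1)))
          le_sup_right (ws (i + 1))) :
    ∀ (d i : ℕ), i + d ≤ n →
      T (lline m c (x i)) (lline m c (x i) ⊔ lline m c (x (i + d)))
          le_sup_left (ws i) =
        T (lline m c (x (i + d))) (lline m c (x i) ⊔ lline m c (x (i + d)))
          le_sup_right (ws (i + d)) := by
  have hmono : ∀ (d i : ℕ), i + d ≤ n → x i ≤ x (i + d) := by
    intro d
    induction d with
    | zero => intro i _; exact le_rfl
    | succ d ih =>
      intro i h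
      exact (ih i (by omega)).trans (hx (i + d) (by omega))
  intro d
  induction d with
  | zero => intro i _; rfl
  | succ d ih =>
    intro i h
    have hij : x i ≤ x (i + d) := hmono d i (by omega)
    have hj1 : x (i + d) ≤ x (i + d + 1) := hx (i + d) (by omega)
    set P := lline m c (x i) ⊔ lline m c (x (i + d + 1)) with hP
    have hmid : lline m c (x (i + d)) ≤ P := lline_le_sup m c hm hij hj1
    have hJ1 : lline m c (x i) ⊔ lline m c (x (i + d)) ≤ P := sup_le le_sup_left hmid
    have hJ2 : lline m c (x (i + d)) ⊔ lline m c (x (i + d + 1)) ≤ P :=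
      sup_le hmid le_sup_right
    calc T (lline m c (x i)) P le_sup_left (ws i)
        = T _ P hJ1 (T (lline m c (x i)) _ le_sup_left (ws i)) :=
          (Tcomp hcomp _ _ _).symm
      _ = T _ P hJ1 (T (lline m c (x (i + d))) _ le_sup_right (ws (i + d))) := by
          rw [ih i (by omega)]
      _ = T (lline m c (x (i + d))) P (le_sup_right.trans hJ1) (ws (i + d)) :=
          Tcomp hcomp _ _ _
      _ = T _ P hJ2 (T (lline m c (x (i + d))) _ le_sup_left (ws (i + d))) :=
          (Tcomp hcomp _ _ _).symm
      _ = T _ P hJ2 (T (lline m c (x (i + d + 1))) _ le_sup_right (ws (i + d + 1))) := by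
          rw [hstep (i + d) (by omega)]
      _ = T (lline m c (x (i + d + 1))) P le_sup_right (ws (i + d + 1)) :=
          Tcomp hcomp _ _ _

lemma compat_cast {s t s' t' : ℝ} (hs : s = s') (ht : t = t')
    (u : U (lline m c s)) (u' : U (lline m c t))
    (h : T (lline m c s) (lline m c s ⊔ lline m c t) le_sup_left u
       = T (lline m c t) (lline m c s ⊔ lline m c t) le_sup_right u') :
    T (lline m c s') (lline m c s' ⊔ lline m c t') le_sup_left (castU U m c hs u)
      = T (lline m c t') (lline m c s' ⊔ lline m c t') le_sup_right (castU U m c ht u') := by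
  subst hs; subst ht; exact h

end


section

variable {k : Type*} [Field k] {U : ℝ × ℝ → Type*}
  [∀ p, AddCommGroup (U p)] [∀ p, Module k (U p)]
  {m c : ℝ}

lemma castU_eq_iff {s t : ℝ} (h : s = t) (u : U (lline m c s)) (u' : U (lline m c t)) :
    castU U m c h u = u' ↔ u = castU U m c h.symm u' := by
  subst h; rfl

end

section

variable {k : Type*} [Field k] {U : ℝ × ℝ → Type*}
  [∀ p, AddCommGroup (U p)] [∀ p, Module k (U p)]
  {T : ∀ p q : ℝ × ℝ, p ≤ q → (U p →ₗ[k] U q)}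
  {m c : ℝ}

lemma chain_const (hid : ∀ p : ℝ × ℝ, T p p le_rfl = LinearMap.id)
    (hcomp : ∀ (p q r : ℝ × ℝ) (hpq : p ≤ q) (hqr : q ≤ r),
      (T q r hqr).comp (T p q hpq) = T p r (hpq.trans hqr))
    (hm : 0 < m) (n : ℕ) (x : ℕ → ℝ)
    (hx : ∀ i : ℕ, i < n → x i ≤ x (i + 1))
    (ws : ∀ i : ℕ, U (lline m c (x i)))
    (hstep : ∀ i : ℕ, i < n →
      T (lline m c (x i)) (lline m c (x i) ⊔ lline m c (x (i + 1)))
          le_sup_left (ws i) =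
        T (lline m c (x (i + 1))) (lline m c (x i) ⊔ lline m c (x (i + 1)))
          le_sup_right (ws (i + 1)))
    {i i' : ℕ} (hii : i ≤ i') (hin : i' ≤ n) (hxe : x i = x i') :
    ws i' = castU U m c hxe (ws i) := by
  obtain ⟨d, rfl⟩ : ∃ d, i' = i + d := ⟨i' - i, by omega⟩
  have key := chain_compat hcomp hm n x hx ws hstep d i (by omega)
  have hle : lline m c (x i) ⊔ lline m c (x (i + d)) ≤ lline m c (x (i + d)) :=
    sup_le (le_of_eq (by rw [hxe])) le_rfl
  have h2 := congrArg (fun z => T _ _ hle z) key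
  rw [Tcomp hcomp, Tcomp hcomp, T_eq_castU hid hxe, T_eq_castU hid rfl] at h2
  exact h2.symm

end

section

variable {k : Type*} [Field k] (U : ℝ × ℝ → Type*)
  [∀ p, AddCommGroup (U p)] [∀ p, Module k (U p)]
  (T : ∀ p q : ℝ × ℝ, p ≤ q → (U p →ₗ[k] U q))
  (m c : ℝ)

/-- If `v ∈ U (ℓ a)` and `w ∈ U (ℓ b)` can be interpolated along a chain
`a = x₀ ≤ ⋯ ≤ x_n = b`, then they can be interpolated along any chain
`a = y₀ ≤ ⋯ ≤ y_p = b` whose values all occur among the `x_i`. -/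
theorem interp_along_coarser_chain
    (hid : ∀ p : ℝ × ℝ, T p p le_rfl = LinearMap.id)
    (hcomp : ∀ (p q r : ℝ × ℝ) (hpq : p ≤ q) (hqr : q ≤ r),
      (T q r hqr).comp (T p q hpq) = T p r (hpq.trans hqr))
    (hm : 0 < m)
    (a b : ℝ) (hab : a ≤ b)
    (v : U (lline m c a)) (w : U (lline m c b))
    (n : ℕ) (x : ℕ → ℝ) (hx : ∀ i : ℕ, i < n → x i ≤ x (i + 1))
    (hx0 : x 0 = a) (hxn : x n = b)
    (p : ℕ) (y : ℕ → ℝ) (hy : ∀ j : ℕ, j < p → y j ≤ y (j + 1))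
    (hy0 : y 0 = a) (hyp : y p = b)
    (hsub : ∀ j : ℕ, j ≤ p → ∃ i : ℕ, i ≤ n ∧ y j = x i)
    (hinterp : InterpAlong U T m c n x (castU U m c hx0.symm v) (castU U m c hxn.symm w)) :
    InterpAlong U T m c p y (castU U m c hy0.symm v) (castU U m c hyp.symm w) := by
  classical
  obtain ⟨ws, hws0, hwsn, hstep⟩ := hinterp
  have xmono : ∀ (d i : ℕ), i + d ≤ n → x i ≤ x (i + d) := by
    intro d
    induction d with
    | zero => intro i _; exact le_rfl
    | succ d ih => intro i h; exact (ih i (by omega)).trans (hx (i + d) (by omega))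
  by_cases hp0 : p = 0
  · subst hp0
    have hba : a = b := hy0.symm.trans hyp
    have hx0n : x 0 = x n := by rw [hx0, hxn]; exact hba
    have hcc := chain_const hid hcomp hm n x hx ws hstep (Nat.zero_le n) le_rfl hx0n
    rw [hwsn, hws0, castU_trans, castU_eq_iff, castU_trans] at hcc
    refine ⟨fun j => if h : j = 0 then castU U m c (by rw [← h] at hy0; exact hy0.symm) v
      else 0, ?_, ?_, ?_⟩
    · beta_reduce
      rw [dif_pos rfl]
    · beta_reduce
      rw [dif_pos rfl, hcc, castU_trans]
    · intro i hi; omega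
  · -- main case
    have hQ : ∀ j, j ≤ p → ∃ i, i ≤ n ∧ x i = y j :=
      fun j hj => (hsub j hj).imp fun i hi => ⟨hi.1, hi.2.symm⟩
    set idx : ℕ → ℕ := fun j =>
      if j = 0 then 0
      else if h : p ≤ j then n
      else Nat.find (hQ j (le_of_lt (lt_of_not_ge h))) with hidx
    have hval : ∀ j, j ≤ p → x (idx j) = y j := by
      intro j hj
      by_cases h0 : j = 0
      · subst h0
        simp only [hidx, if_pos rfl]
        rw [hx0, hy0]
      · by_cases hpj : p ≤ j
        · have hjp : j = p := le_antisymm hj hpj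
          subst hjp
          simp only [hidx, if_neg h0, dif_pos hpj]
          rw [hxn, hyp]
        · simp only [hidx, if_neg h0, dif_neg hpj]
          exact (Nat.find_spec (hQ j (le_of_lt (lt_of_not_ge hpj)))).2
    have hlen : ∀ j, j ≤ p → idx j ≤ n := by
      intro j hj
      by_cases h0 : j = 0
      · subst h0; simp only [hidx, if_pos rfl]; exact Nat.zero_le n
      · by_cases hpj : p ≤ j
        · simp only [hidx, if_neg h0, dif_pos hpj]
          exact le_rfl
        · simp only [hidx, if_neg h0, dif_neg hpj]
          exact (Nat.find_spec (hQ j (le_of_lt (lt_of_not_ge hpj)))).1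
    have hmono : ∀ j, j < p → idx j ≤ idx (j + 1) := by
      intro j hj
      by_cases h0 : j = 0
      · subst h0; simp only [hidx, if_pos rfl]; exact Nat.zero_le _
      · have hpj : ¬ p ≤ j := by omega
        simp only [hidx, if_neg h0, dif_neg hpj]
        by_cases hpj1 : p ≤ j + 1
        · rw [if_neg (by omega : ¬ j + 1 = 0), dif_pos hpj1]
          exact (Nat.find_spec (hQ j (le_of_lt (lt_of_not_ge hpj)))).1
        · rw [if_neg (by omega : ¬ j + 1 = 0), dif_neg hpj1]
          by_contra hlt
          push_neg at hlt
          have hsp := Nat.find_spec (hQ (j + 1) (le_of_lt (lt_of_not_ge hpj1)))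
          have h1 : y j ≤ y (j + 1) := hy j hj
          have h2 : x (Nat.find (hQ (j + 1) (le_of_lt (lt_of_not_ge hpj1)))) ≤
              x (Nat.find (hQ j (le_of_lt (lt_of_not_ge hpj)))) := by
            obtain ⟨d, hd⟩ : ∃ d, Nat.find (hQ j (le_of_lt (lt_of_not_ge hpj))) =
                Nat.find (hQ (j + 1) (le_of_lt (lt_of_not_ge hpj1))) + d :=
              ⟨Nat.find (hQ j (le_of_lt (lt_of_not_ge hpj))) -
                Nat.find (hQ (j + 1) (le_of_lt (lt_of_not_ge hpj1))), by omega⟩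
            rw [hd]
            exact xmono d _ (by
              rw [← hd]
              exact (Nat.find_spec (hQ j (le_of_lt (lt_of_not_ge hpj)))).1)
          have h3 := (Nat.find_spec (hQ j (le_of_lt (lt_of_not_ge hpj)))).2
          exact Nat.find_min (hQ j (le_of_lt (lt_of_not_ge hpj))) hlt
            ⟨hsp.1, by rw [hsp.2] at h2 ⊢; rw [h3] at h2; linarith⟩
    refine ⟨fun j => if h : j ≤ p then castU U m c (hval j h) (ws (idx j)) else 0,
      ?_, ?_, ?_⟩
    · simp only [dif_pos (Nat.zero_le p)]
      have aux : ∀ (i : ℕ) (hi : i = 0) (hv : x i = y 0),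
          castU U m c hv (ws i) = castU U m c hy0.symm v := by
        intro i hi hv
        subst hi
        rw [hws0, castU_trans]
      have h0 : idx 0 = 0 := by simp [hidx]
      exact aux (idx 0) h0 (hval 0 (Nat.zero_le p))
    · simp only [dif_pos (le_refl p)]
      have aux : ∀ (i : ℕ) (hi : i = n) (hv : x i = y p),
          castU U m c hv (ws i) = castU U m c hyp.symm w := by
        intro i hi hv
        subst hi
        rw [hwsn, castU_trans]
      have hpn : idx p = n := by simp [hidx, hp0]
      exact aux (idx p) hpn (hval p le_rfl)
    · intro j hj
      simp only [dif_pos (show j ≤ p by omega), dif_pos (show j + 1 ≤ p by omega)]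
      refine compat_cast (hval j (by omega)) (hval (j + 1) (by omega)) _ _ ?_
      obtain ⟨d, hd⟩ : ∃ d, idx (j + 1) = idx j + d :=
        ⟨idx (j + 1) - idx j, by have := hmono j hj; omega⟩
      rw [hd]
      exact chain_compat hcomp hm n x hx ws hstep d (idx j)
        (by rw [← hd]; exact hlen (j + 1) (by omega))

end
end

section
/- Let (U, T) be a 2-D persistence module over a field k with U_p finite-dimensional for every p ∈ ℝ × ℝ, and fix m > 0 and c ∈ ℝ, with ℓ(x) = (x, c − m·x). For a ≤ b define the slice correspondence R_{a,b} ⊆ U_{ℓ(a)} × U_{ℓ(b)} by: (v, w) ∈ R_{a,b} iff v and w can be interpolated along every chain from a to b. Then for all a ≤ b ≤ c' and all v ∈ U_{ℓ(a)}, u ∈ U_{ℓ(c')}: (v, u) ∈ R_{a,c'} if and only if there exists w ∈ U_{ℓ(b)} with (v, w) ∈ R_{a,b} and (w, u) ∈ R_{b,c'}. (Hence the slice of a pointwise finite-dimensional 2-D persistence module along a negatively sloped line is a correspondence module.) -/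
section

variable {k : Type*} [Field k] (U : ℝ × ℝ → Type*)
  [∀ p, AddCommGroup (U p)] [∀ p, Module k (U p)]
  (T : ∀ p q : ℝ × ℝ, p ≤ q → (U p →ₗ[k] U q))
  (m c : ℝ)

-- cast lemmas
theorem castU_rfl {s : ℝ} (v : U (lline m c s)) : castU U m c rfl v = v := rfl

theorem castU_castU {r s t : ℝ} (h1 : r = s) (h2 : s = t) (v : U (lline m c r)) :
    castU U m c h2 (castU U m c h1 v) = castU U m c (h1.trans h2) v := by
  subst h1; subst h2; rfl

theorem castU_add {s t : ℝ} (h : s = t) (v w : U (lline m c s)) :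
    castU U m c h (v + w) = castU U m c h v + castU U m c h w := by subst h; rfl

theorem castU_sub {s t : ℝ} (h : s = t) (v w : U (lline m c s)) :
    castU U m c h (v - w) = castU U m c h v - castU U m c h w := by subst h; rfl

theorem castU_smul {s t : ℝ} (h : s = t) (r : k) (v : U (lline m c s)) :
    castU U m c h (r • v) = r • castU U m c h v := by subst h; rfl

theorem castU_zero {s t : ℝ} (h : s = t) :
    castU U m c h (0 : U (lline m c s)) = 0 := by subst h; rfl

variable {U m c} in
theorem step_congr {s t s' t' : ℝ} (hs : s = s') (ht : t = t')
    {vs : U (lline m c s)} {vt : U (lline m c t)}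
    (h : T (lline m c s) (lline m c s ⊔ lline m c t) le_sup_left vs
       = T (lline m c t) (lline m c s ⊔ lline m c t) le_sup_right vt) :
    T (lline m c s') (lline m c s' ⊔ lline m c t') le_sup_left (castU U m c hs vs)
      = T (lline m c t') (lline m c s' ⊔ lline m c t') le_sup_right (castU U m c ht vt) := by
  subst hs; subst ht; exact h

-- order lemmas on the line
theorem lline_le_join (hm : 0 ≤ m) {a1 a2 a4 : ℝ} (h12 : a1 ≤ a2) (h24 : a2 ≤ a4) :
    lline m c a2 ≤ lline m c a1 ⊔ lline m c a4 := by
  constructor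
  · simp only [lline, Prod.fst_sup, le_sup_iff]; right; exact h24
  · simp only [lline, Prod.snd_sup, le_sup_iff]; left; nlinarith

theorem join_le_join (hm : 0 ≤ m) {a1 a2 a3 a4 : ℝ} (h12 : a1 ≤ a2) (h23 : a2 ≤ a3)
    (h34 : a3 ≤ a4) : lline m c a2 ⊔ lline m c a3 ≤ lline m c a1 ⊔ lline m c a4 := by
  apply sup_le
  · exact lline_le_join m c hm h12 (h23.trans h34)
  · exact lline_le_join m c hm (h12.trans h23) h34

theorem chain_mono {N : ℕ} {z : ℕ → ℝ} (hz : ∀ i < N, z i ≤ z (i + 1)) :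
    ∀ i j, i ≤ j → j ≤ N → z i ≤ z j := by
  intro i j hij hjN
  induction j with
  | zero => simp_all
  | succ j ih =>
    rcases Nat.eq_or_lt_of_le hij with h | h
    · exact h ▸ le_rfl
    · exact (ih (Nat.lt_succ_iff.mp h) (le_of_lt (Nat.lt_of_succ_le hjN))).trans
        (hz j (Nat.lt_of_succ_le hjN))
set_option linter.unusedSectionVars false

variable {U T m c} in
theorem coarsen
    (hcomp : ∀ (p q r : ℝ × ℝ) (hpq : p ≤ q) (hqr : q ≤ r),
      (T q r hqr).comp (T p q hpq) = T p r (hpq.trans hqr))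
    (hm : 0 ≤ m) {N : ℕ} {z : ℕ → ℝ} (hz : ∀ i < N, z i ≤ z (i + 1))
    {zs : ∀ i : ℕ, U (lline m c (z i))}
    (hzs : ∀ i : ℕ, i < N →
      T (lline m c (z i)) (lline m c (z i) ⊔ lline m c (z (i + 1)))
          le_sup_left (zs i) =
        T (lline m c (z (i + 1))) (lline m c (z i) ⊔ lline m c (z (i + 1)))
          le_sup_right (zs (i + 1)))
    {j j' : ℕ} (hjj : j ≤ j') (hj'N : j' ≤ N) :
    T (lline m c (z j)) (lline m c (z j) ⊔ lline m c (z j')) le_sup_left (zs j) =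
      T (lline m c (z j')) (lline m c (z j) ⊔ lline m c (z j')) le_sup_right (zs j') := by
  obtain ⟨d, rfl⟩ := Nat.exists_eq_add_of_le hjj
  clear hjj
  set J := lline m c (z j) ⊔ lline m c (z (j + d)) with hJ
  have hle : ∀ e : ℕ, e ≤ d → lline m c (z (j + e)) ≤ J := by
    intro e he
    exact lline_le_join m c hm
      (chain_mono hz j (j + e) (Nat.le_add_right _ _) ((by omega : j + e ≤ j + d).trans hj'N))
      (chain_mono hz (j + e) (j + d) (by omega) hj'N)
  have key : ∀ (e : ℕ) (he : e ≤ d),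
      T (lline m c (z j)) J le_sup_left (zs j) =
        T (lline m c (z (j + e))) J (hle e he) (zs (j + e)) := by
    intro e he
    induction e with
    | zero => rfl
    | succ e ih =>
      have he' : e ≤ d := by omega
      have step := hzs (j + e) (by omega)
      set J' := lline m c (z (j + e)) ⊔ lline m c (z (j + e + 1)) with hJ'
      have hJ'J : J' ≤ J := by
        apply join_le_join m c hm
          (chain_mono hz j (j + e) (by omega) (by omega)) (hz (j + e) (by omega))
          (chain_mono hz (j + e + 1) (j + d) (by omega) hj'N)
      have e1 : T (lline m c (z (j + e))) J (hle e he') (zs (j + e))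
          = T J' J hJ'J (T (lline m c (z (j + e))) J' le_sup_left (zs (j + e))) := by
        rw [← LinearMap.comp_apply, hcomp]
      have e2 : T (lline m c (z (j + e + 1))) J (hle (e+1) he) (zs (j + e + 1))
          = T J' J hJ'J (T (lline m c (z (j + e + 1))) J' le_sup_right (zs (j + e + 1))) := by
        rw [← LinearMap.comp_apply, hcomp]
      rw [ih he', e1, step]
      exact e2.symm
  exact key d le_rfl
variable {U T m c} in
theorem interp_sub
    (hcomp : ∀ (p q r : ℝ × ℝ) (hpq : p ≤ q) (hqr : q ≤ r),
      (T q r hqr).comp (T p q hpq) = T p r (hpq.trans hqr))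
    (hm : 0 ≤ m) {N : ℕ} {z : ℕ → ℝ} (hz : ∀ i < N, z i ≤ z (i + 1))
    {zs : ∀ i : ℕ, U (lline m c (z i))}
    (hzs : ∀ i : ℕ, i < N →
      T (lline m c (z i)) (lline m c (z i) ⊔ lline m c (z (i + 1)))
          le_sup_left (zs i) =
        T (lline m c (z (i + 1))) (lline m c (z i) ⊔ lline m c (z (i + 1)))
          le_sup_right (zs (i + 1)))
    (n : ℕ) (g : ℕ → ℕ) (hg : ∀ i < n, g i ≤ g (i + 1)) (hgN : ∀ i ≤ n, g i ≤ N)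
    (x : ℕ → ℝ) (hx : ∀ i ≤ n, x i = z (g i))
    (v : U (lline m c (x 0))) (w : U (lline m c (x n)))
    (hv : v = castU U m c (hx 0 (Nat.zero_le n)).symm (zs (g 0)))
    (hw : w = castU U m c (hx n le_rfl).symm (zs (g n))) :
    InterpAlong U T m c n x v w := by
  classical
  refine ⟨fun i => if h : i ≤ n then castU U m c (hx i h).symm (zs (g i)) else 0, ?_, ?_, ?_⟩
  · simp only [dif_pos (Nat.zero_le n)]; rw [hv]
  · simp only [dif_pos le_rfl]; rw [hw]
  · intro i hi
    simp only [dif_pos hi.le, dif_pos (show i + 1 ≤ n from hi)]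
    exact step_congr T (hx i hi.le).symm (hx (i+1) hi).symm
      (coarsen hcomp hm hz hzs (hg i hi) (hgN (i+1) hi))
variable {U T m c} in
theorem interp_zero (n : ℕ) (x : ℕ → ℝ) :
    InterpAlong U T m c n x 0 0 :=
  ⟨fun _ => 0, rfl, rfl, fun i _ => by simp⟩

variable {U T m c} in
theorem interp_add {n : ℕ} {x : ℕ → ℝ} {v v' : U (lline m c (x 0))}
    {w w' : U (lline m c (x n))} (h : InterpAlong U T m c n x v w)
    (h' : InterpAlong U T m c n x v' w') :
    InterpAlong U T m c n x (v + v') (w + w') := by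
  obtain ⟨ws, h0, hn, hs⟩ := h
  obtain ⟨ws', h0', hn', hs'⟩ := h'
  exact ⟨fun i => ws i + ws' i, by simp only [h0, h0'], by simp only [hn, hn'],
    fun i hi => by simp only [map_add, hs i hi, hs' i hi]⟩

variable {U T m c} in
theorem interp_smul {n : ℕ} {x : ℕ → ℝ} {v : U (lline m c (x 0))}
    {w : U (lline m c (x n))} (r : k) (h : InterpAlong U T m c n x v w) :
    InterpAlong U T m c n x (r • v) (r • w) := by
  obtain ⟨ws, h0, hn, hs⟩ := h
  exact ⟨fun i => r • ws i, by simp only [h0], by simp only [hn],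
    fun i hi => by simp only [map_smul, hs i hi]⟩

variable {U T m c} in
theorem interp_neg {n : ℕ} {x : ℕ → ℝ} {v : U (lline m c (x 0))}
    {w : U (lline m c (x n))} (h : InterpAlong U T m c n x v w) :
    InterpAlong U T m c n x (-v) (-w) := by
  have := interp_smul (-1 : k) h
  simpa using this

variable {U T m c} in
theorem interp_vsub {n : ℕ} {x : ℕ → ℝ} {v v' : U (lline m c (x 0))}
    {w w' : U (lline m c (x n))} (h : InterpAlong U T m c n x v w)
    (h' : InterpAlong U T m c n x v' w') :
    InterpAlong U T m c n x (v - v') (w - w') := by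
  have := interp_add h (interp_neg h')
  simpa [sub_eq_add_neg] using this
-- Sorted-merge infrastructure on `Finset ℝ`.
namespace SliceMerge
open List

noncomputable def zf (s : Finset ℝ) : ℕ → ℝ := fun i => (s.sort (· ≤ ·)).getD i 0

noncomputable def idx (s : Finset ℝ) (t : ℝ) : ℕ := (s.sort (· ≤ ·)).idxOf t

theorem sorted_lt (s : Finset ℝ) : (s.sort (· ≤ ·)).Pairwise (· < ·) :=
  (Finset.sortedLT_sort s).pairwise

theorem getElem_strict {s : Finset ℝ} {i j : ℕ} (hi : i < (s.sort (· ≤ ·)).length)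
    (hj : j < (s.sort (· ≤ ·)).length) (hij : i < j) :
    (s.sort (· ≤ ·))[i] < (s.sort (· ≤ ·))[j] :=
  List.pairwise_iff_getElem.mp (sorted_lt s) i j hi hj hij

theorem idx_lt_length {s : Finset ℝ} {t : ℝ} (ht : t ∈ s) :
    idx s t < (s.sort (· ≤ ·)).length :=
  List.idxOf_lt_length_iff.mpr ((Finset.mem_sort _).mpr ht)

theorem idx_le {s : Finset ℝ} {t : ℝ} (ht : t ∈ s) : idx s t ≤ s.card - 1 := by
  have := idx_lt_length ht
  rw [Finset.length_sort] at this
  omega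

theorem zf_idx {s : Finset ℝ} {t : ℝ} (ht : t ∈ s) : zf s (idx s t) = t := by
  rw [zf, List.getD_eq_getElem _ _ (idx_lt_length ht)]
  exact List.getElem_idxOf (idx_lt_length ht)

theorem zf_mem {s : Finset ℝ} {i : ℕ} (hi : i < (s.sort (· ≤ ·)).length) : zf s i ∈ s := by
  rw [zf, List.getD_eq_getElem _ _ hi]
  exact (Finset.mem_sort _).mp (List.getElem_mem _)

theorem zf_chain {s : Finset ℝ} {i : ℕ} (hi : i < s.card - 1) : zf s i ≤ zf s (i + 1) := by
  have h1 : i < (s.sort (· ≤ ·)).length := by rw [Finset.length_sort]; omega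
  have h2 : i + 1 < (s.sort (· ≤ ·)).length := by rw [Finset.length_sort]; omega
  simp only [zf]
  rw [List.getD_eq_getElem _ _ h1, List.getD_eq_getElem _ _ h2]
  exact (getElem_strict h1 h2 (Nat.lt_succ_self i)).le

theorem idx_mono {s : Finset ℝ} {t t' : ℝ} (ht : t ∈ s) (ht' : t' ∈ s) (h : t ≤ t') :
    idx s t ≤ idx s t' := by
  by_contra hlt
  push_neg at hlt
  have := getElem_strict (idx_lt_length ht') (idx_lt_length ht) hlt
  have e1 : (s.sort (· ≤ ·))[idx s t']'(idx_lt_length ht') = t' :=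
    List.getElem_idxOf (idx_lt_length ht')
  have e2 : (s.sort (· ≤ ·))[idx s t]'(idx_lt_length ht) = t :=
    List.getElem_idxOf (idx_lt_length ht)
  rw [e1, e2] at this
  exact absurd h (not_le.mpr this)

theorem idx_min {s : Finset ℝ} {t : ℝ} (ht : t ∈ s) (hmin : ∀ t' ∈ s, t ≤ t') :
    idx s t = 0 := by
  by_contra h0
  have h0' : 0 < idx s t := Nat.pos_of_ne_zero h0
  have hlen : 0 < (s.sort (· ≤ ·)).length := lt_of_le_of_lt (Nat.zero_le _) (idx_lt_length ht)
  have := getElem_strict hlen (idx_lt_length ht) h0'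
  have e2 : (s.sort (· ≤ ·))[idx s t]'(idx_lt_length ht) = t :=
    List.getElem_idxOf (idx_lt_length ht)
  rw [e2] at this
  refine absurd (hmin _ (zf_mem hlen)) (not_le.mpr ?_)
  simp only [zf]
  rw [List.getD_eq_getElem _ _ hlen]
  exact this

theorem idx_max {s : Finset ℝ} {t : ℝ} (ht : t ∈ s) (hmax : ∀ t' ∈ s, t' ≤ t) :
    idx s t = s.card - 1 := by
  have h1 := idx_le ht
  rcases Nat.eq_or_lt_of_le h1 with h | h
  · exact h
  · exfalso
    have hN : s.card - 1 < (s.sort (· ≤ ·)).length := by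
      rw [Finset.length_sort]
      have : 0 < s.card := Finset.card_pos.mpr ⟨t, ht⟩
      omega
    have := getElem_strict (idx_lt_length ht) hN h
    have e2 : (s.sort (· ≤ ·))[idx s t]'(idx_lt_length ht) = t :=
      List.getElem_idxOf (idx_lt_length ht)
    rw [e2] at this
    refine absurd (hmax _ (zf_mem hN)) (not_le.mpr ?_)
    simp only [zf]
    rw [List.getD_eq_getElem _ _ hN]
    exact this

end SliceMerge
/-- In a finite-dimensional space, a downward-directed family of cosets of submodules has
nonempty intersection. -/
theorem coset_inter {V : Type*} [AddCommGroup V] [Module k V] [FiniteDimensional k V]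
    {ι : Type*} [Nonempty ι] (S : ι → Set V) (M : ι → Submodule k V)
    (hS : ∀ j, ∃ w₀, ∀ w', w' ∈ S j ↔ w' - w₀ ∈ M j)
    (hdir : ∀ j j', ∃ j'', S j'' ⊆ S j ∩ S j') :
    (⋂ j, S j).Nonempty := by
  classical
  have hne : ∀ j, (S j).Nonempty := by
    intro j
    obtain ⟨w₀, hw₀⟩ := hS j
    exact ⟨w₀, (hw₀ w₀).mpr (by simp)⟩
  -- pick an index of minimal finrank
  have hrange : (Set.range fun j => Module.finrank k (M j)).Nonempty :=
    Set.range_nonempty _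
  obtain ⟨j₀, hj₀⟩ := Nat.sInf_mem hrange
  have hmin : ∀ j, Module.finrank k (M j₀) ≤ Module.finrank k (M j) := by
    intro j
    have e : Module.finrank k (M j₀) = sInf (Set.range fun j => Module.finrank k (M j)) := hj₀
    rw [e]
    exact Nat.sInf_le ⟨j, rfl⟩
  have hsub : ∀ j, S j₀ ⊆ S j := by
    intro j
    obtain ⟨j'', hj''⟩ := hdir j₀ j
    obtain ⟨w₀, hw₀⟩ := hS j₀
    obtain ⟨w₂, hw₂⟩ := hS j''
    obtain ⟨ww, hww⟩ := hne j''
    have hwwj₀ : ww ∈ S j₀ := (hj'' hww).1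
    -- M j'' ≤ M j₀
    have hle : M j'' ≤ M j₀ := by
      intro mm hmm
      have h1 : ww + mm ∈ S j'' := (hw₂ _).mpr (by
        have h := (hw₂ ww).mp hww
        have e : ww + mm - w₂ = (ww - w₂) + mm := by abel
        rw [e]
        exact (M j'').add_mem h hmm)
      have h2 : ww + mm ∈ S j₀ := (hj'' h1).1
      have h3 := (hw₀ _).mp h2
      have h4 := (hw₀ _).mp hwwj₀
      have : ww + mm - w₀ - (ww - w₀) = mm := by abel
      exact this ▸ (M j₀).sub_mem h3 h4
    have heq : M j'' = M j₀ := Submodule.eq_of_le_of_finrank_le hle (hmin j'')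
    -- S j₀ ⊆ S j''
    intro w hw
    have hww'' := (hw₂ ww).mp hww
    have h5 : w - ww ∈ M j₀ := by
      have := (M j₀).sub_mem ((hw₀ w).mp hw) ((hw₀ ww).mp hwwj₀)
      simpa using this
    have h6 : w ∈ S j'' := (hw₂ w).mpr (by
      have : w - w₂ = (w - ww) + (ww - w₂) := by abel
      rw [this]
      exact (M j'').add_mem (heq ▸ h5) hww'')
    exact (hj'' h6).2
  obtain ⟨w, hw⟩ := hne j₀
  exact ⟨w, Set.mem_iInter.mpr fun j => hsub j hw⟩
def IsChain2 (n : ℕ) (x : ℕ → ℝ) (α β : ℝ) : Prop :=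
  (∀ i < n, x i ≤ x (i + 1)) ∧ x 0 = α ∧ x n = β

variable {U m c} in
theorem fcast {y : ℕ → ℝ} (f : ∀ i : ℕ, U (lline m c (y i))) {j j' : ℕ} (e : j = j') :
    f j' = castU U m c (congrArg y e) (f j) := by subst e; rfl

theorem chain_bounds {n : ℕ} {x : ℕ → ℝ} {α β : ℝ} (hX : IsChain2 n x α β) :
    ∀ i ≤ n, α ≤ x i ∧ x i ≤ β := by
  intro i hi
  constructor
  · rw [← hX.2.1]; exact chain_mono hX.1 0 i (Nat.zero_le _) hi
  · rw [← hX.2.2]; exact chain_mono hX.1 i n hi le_rfl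

variable {U T m c} in
theorem interp_through
    (hcomp : ∀ (p q r : ℝ × ℝ) (hpq : p ≤ q) (hqr : q ≤ r),
      (T q r hqr).comp (T p q hpq) = T p r (hpq.trans hqr))
    (hm : 0 ≤ m) {α β : ℝ} {N : ℕ} {z : ℕ → ℝ} (hZ : IsChain2 N z α β)
    {n : ℕ} {x : ℕ → ℝ} (hX : IsChain2 n x α β)
    (g : ℕ → ℕ) (hg : ∀ i < n, g i ≤ g (i + 1)) (hgN : ∀ i ≤ n, g i ≤ N)
    (hx : ∀ i ≤ n, x i = z (g i)) (hg0 : g 0 = 0) (hgn : g n = N)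
    {vα : U (lline m c α)} {wβ : U (lline m c β)}
    (h : InterpAlong U T m c N z (castU U m c hZ.2.1.symm vα) (castU U m c hZ.2.2.symm wβ)) :
    InterpAlong U T m c n x (castU U m c hX.2.1.symm vα) (castU U m c hX.2.2.symm wβ) := by
  obtain ⟨zs, h0, hN, hs⟩ := h
  refine interp_sub hcomp hm hZ.1 hs n g hg hgN x hx _ _ ?_ ?_
  · rw [fcast zs hg0.symm, h0, castU_castU, castU_castU]
  · rw [fcast zs hgn.symm, hN, castU_castU, castU_castU]

open SliceMerge in
theorem subchain_data {α β : ℝ} (s : Finset ℝ)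
    (hlb : ∀ t ∈ s, α ≤ t) (hub : ∀ t ∈ s, t ≤ β) (hα : α ∈ s) (hβ : β ∈ s)
    {n : ℕ} {x : ℕ → ℝ} (hX : IsChain2 n x α β) (hmem : ∀ i ≤ n, x i ∈ s) :
    IsChain2 (s.card - 1) (zf s) α β ∧
      (∀ i < n, idx s (x i) ≤ idx s (x (i + 1))) ∧
      (∀ i ≤ n, idx s (x i) ≤ s.card - 1) ∧
      (∀ i ≤ n, x i = zf s (idx s (x i))) ∧
      idx s (x 0) = 0 ∧ idx s (x n) = s.card - 1 := by
  have hz0 : zf s 0 = α := by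
    have h1 : idx s α = 0 := idx_min hα hlb
    have := zf_idx hα
    rwa [h1] at this
  have hzN : zf s (s.card - 1) = β := by
    have h1 : idx s β = s.card - 1 := idx_max hβ hub
    have := zf_idx hβ
    rwa [h1] at this
  refine ⟨⟨fun i hi => zf_chain hi, hz0, hzN⟩, ?_, ?_, ?_, ?_, ?_⟩
  · intro i hi
    exact idx_mono (hmem i hi.le) (hmem (i+1) hi) (hX.1 i hi)
  · intro i hi
    exact idx_le (hmem i hi)
  · intro i hi
    exact (zf_idx (hmem i hi)).symm
  · rw [hX.2.1]; exact idx_min hα hlb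
  · rw [hX.2.2]; exact idx_max hβ hub
variable {U T m c} in
theorem slice_concat {a b c' : ℝ} {v : U (lline m c a)} {w : U (lline m c b)}
    {u : U (lline m c c')}
    (hS1 : SliceRel U T m c a b v w) (hS2 : SliceRel U T m c b c' w u)
    {N : ℕ} {z : ℕ → ℝ} (hZ : IsChain2 N z a c') {kb : ℕ} (hkb : kb ≤ N)
    (hzkb : z kb = b) :
    InterpAlong U T m c N z (castU U m c hZ.2.1.symm v) (castU U m c hZ.2.2.symm u) := by
  classical
  have hmono1 : ∀ i < kb, z i ≤ z (i + 1) := fun i hi => hZ.1 i (lt_of_lt_of_le hi hkb)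
  obtain ⟨ws₁, h10, h1k, h1s⟩ := hS1 kb z hmono1 hZ.2.1 hzkb
  set y : ℕ → ℝ := fun i => z (i + kb) with hy
  have hmono2 : ∀ i < N - kb, y i ≤ y (i + 1) := by
    intro i hi
    show z (i + kb) ≤ z (i + 1 + kb)
    have e : i + 1 + kb = (i + kb) + 1 := by omega
    rw [e]
    exact hZ.1 (i + kb) (by omega)
  have hy0 : y 0 = b := by show z (0 + kb) = b; rw [Nat.zero_add]; exact hzkb
  have hyN : y (N - kb) = c' := by
    show z (N - kb + kb) = c'; rw [Nat.sub_add_cancel hkb]; exact hZ.2.2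
  obtain ⟨ws₂, h20, h2N, h2s⟩ := hS2 (N - kb) y hmono2 hy0 hyN
  set zs : ∀ i : ℕ, U (lline m c (z i)) := fun i =>
    if h : i ≤ kb then ws₁ i
    else castU U m c (congrArg z (Nat.sub_add_cancel (le_of_not_ge h))) (ws₂ (i - kb))
    with hzsdef
  have claim : ∀ (i : ℕ) (h1 : kb ≤ i), i ≤ N →
      zs i = castU U m c (congrArg z (Nat.sub_add_cancel h1)) (ws₂ (i - kb)) := by
    intro i h1 h2
    rcases eq_or_lt_of_le h1 with heq | hlt
    · subst heq
      have e0 : zs kb = ws₁ kb := by simp only [hzsdef]; rw [dif_pos le_rfl]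
      rw [e0, h1k, fcast (U := U) (m := m) (c := c) (y := y) ws₂
        (show (0 : ℕ) = kb - kb by omega), h20, castU_castU, castU_castU]
    · have e0 : zs i = castU U m c
          (congrArg z (Nat.sub_add_cancel (le_of_not_ge (not_le.mpr hlt)))) (ws₂ (i - kb)) := by
        simp only [hzsdef]; rw [dif_neg (not_le.mpr hlt)]
      rw [e0]
  refine ⟨zs, ?_, ?_, ?_⟩
  · have e0 : zs 0 = ws₁ 0 := by simp only [hzsdef]; rw [dif_pos (Nat.zero_le kb)]
    rw [e0, h10]
  · rw [claim N hkb le_rfl, h2N, castU_castU]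
  · intro i hi
    by_cases hik : i + 1 ≤ kb
    · have e1 : zs i = ws₁ i := by simp only [hzsdef]; rw [dif_pos (by omega)]
      have e2 : zs (i + 1) = ws₁ (i + 1) := by simp only [hzsdef]; rw [dif_pos hik]
      rw [e1, e2]
      exact h1s i (by omega)
    · have h1 : kb ≤ i := by omega
      have step := h2s (i - kb) (by omega)
      have hs : y (i - kb) = z i := by
        show z (i - kb + kb) = z i; rw [Nat.sub_add_cancel h1]
      have ht : y (i - kb + 1) = z (i + 1) := by
        show z (i - kb + 1 + kb) = z (i + 1); congr 1; omega
      have main := step_congr T hs ht step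
      have e1 : zs i = castU U m c hs (ws₂ (i - kb)) := claim i h1 (by omega)
      have e2 : zs (i + 1) = castU U m c ht (ws₂ (i - kb + 1)) := by
        rw [claim (i + 1) (by omega) (by omega),
          fcast (U := U) (m := m) (c := c) (y := y) ws₂ (show i - kb + 1 = i + 1 - kb by omega),
          castU_castU]
      rw [e1, e2]
      exact main
variable {U T m c} in
theorem slice_split
    (hcomp : ∀ (p q r : ℝ × ℝ) (hpq : p ≤ q) (hqr : q ≤ r),
      (T q r hqr).comp (T p q hpq) = T p r (hpq.trans hqr))
    (hm : 0 ≤ m) {a b c' : ℝ} {v : U (lline m c a)} {u : U (lline m c c')}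
    (hvu : SliceRel U T m c a c' v u)
    {n : ℕ} {x : ℕ → ℝ} (hX : IsChain2 n x a b)
    {p : ℕ} {y : ℕ → ℝ} (hY : IsChain2 p y b c') :
    ∃ w : U (lline m c b),
      InterpAlong U T m c n x (castU U m c hX.2.1.symm v) (castU U m c hX.2.2.symm w) ∧
      InterpAlong U T m c p y (castU U m c hY.2.1.symm w) (castU U m c hY.2.2.symm u) := by
  classical
  set zc : ℕ → ℝ := fun i => if i ≤ n then x i else y (i - n) with hzc
  have hZC : IsChain2 (n + p) zc a c' := by
    refine ⟨?_, ?_, ?_⟩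
    · intro i hi
      show (if i ≤ n then x i else y (i - n)) ≤ (if i + 1 ≤ n then x (i + 1) else y (i + 1 - n))
      by_cases h1 : i + 1 ≤ n
      · rw [if_pos (by omega), if_pos h1]
        exact hX.1 i (by omega)
      · by_cases h2 : i ≤ n
        · rw [if_pos h2, if_neg h1]
          have hin : i = n := by omega
          subst hin
          calc x i = b := hX.2.2
          _ = y 0 := hY.2.1.symm
          _ ≤ y (i + 1 - i) := chain_mono hY.1 0 (i + 1 - i) (Nat.zero_le _) (by omega)
        · rw [if_neg h2, if_neg h1]
          have e : i + 1 - n = (i - n) + 1 := by omega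
          rw [e]
          exact hY.1 (i - n) (by omega)
    · show (if 0 ≤ n then x 0 else y (0 - n)) = a
      rw [if_pos (Nat.zero_le n)]; exact hX.2.1
    · show (if n + p ≤ n then x (n + p) else y (n + p - n)) = c'
      by_cases hp : p = 0
      · subst hp
        rw [if_pos (by omega)]
        calc x (n + 0) = x n := by rw [Nat.add_zero]
        _ = b := hX.2.2
        _ = y 0 := hY.2.1.symm
        _ = c' := hY.2.2
      · rw [if_neg (by omega), show n + p - n = p from by omega]
        exact hY.2.2
  obtain ⟨ZS, hz0, hznp, hzs⟩ := hvu (n + p) zc hZC.1 hZC.2.1 hZC.2.2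
  have ezcn : zc n = b := by
    show (if n ≤ n then x n else y (n - n)) = b
    rw [if_pos le_rfl]; exact hX.2.2
  refine ⟨castU U m c ezcn (ZS n), ?_, ?_⟩
  · have hx : ∀ i ≤ n, x i = zc i := by
      intro i hi
      show x i = if i ≤ n then x i else y (i - n)
      rw [if_pos hi]
    refine interp_sub hcomp hm hZC.1 hzs n (fun i => i) (fun i hi => by show i ≤ i + 1; omega)
      (fun i hi => by show i ≤ n + p; omega) x hx _ _ ?_ ?_
    · rw [hz0, castU_castU]
    · rw [castU_castU]
  · have hx' : ∀ i ≤ p, y i = zc (n + i) := by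
      intro i hi
      show y i = if n + i ≤ n then x (n + i) else y (n + i - n)
      by_cases h0 : i = 0
      · subst h0
        rw [if_pos (by omega), show n + 0 = n from by omega, hX.2.2, hY.2.1]
      · rw [if_neg (by omega), show n + i - n = i from by omega]
    refine interp_sub hcomp hm hZC.1 hzs p (fun i => n + i)
      (fun i hi => by show n + i ≤ n + (i + 1); omega)
      (fun i hi => by show n + i ≤ n + p; omega) y hx' _ _ ?_ ?_
    · rw [castU_castU]; exact rfl
    · rw [hznp, castU_castU]
open SliceMerge in
theorem merge_side {α β : ℝ} (hαβ : α ≤ β) {n : ℕ} {x : ℕ → ℝ} (hX : IsChain2 n x α β)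
    {n' : ℕ} {x' : ℕ → ℝ} (hX' : IsChain2 n' x' α β) :
    ∃ (Nz : ℕ) (z : ℕ → ℝ) (hZ : IsChain2 Nz z α β),
      (∃ g : ℕ → ℕ, (∀ i < n, g i ≤ g (i + 1)) ∧ (∀ i ≤ n, g i ≤ Nz) ∧
        (∀ i ≤ n, x i = z (g i)) ∧ g 0 = 0 ∧ g n = Nz) ∧
      (∃ g' : ℕ → ℕ, (∀ i < n', g' i ≤ g' (i + 1)) ∧ (∀ i ≤ n', g' i ≤ Nz) ∧
        (∀ i ≤ n', x' i = z (g' i)) ∧ g' 0 = 0 ∧ g' n' = Nz) := by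
  classical
  set s : Finset ℝ :=
    ((Finset.range (n + 1)).image x ∪ (Finset.range (n' + 1)).image x') ∪ {α, β} with hs
  have hmem : ∀ i ≤ n, x i ∈ s := by
    intro i hi
    simp only [hs, Finset.mem_union, Finset.mem_image, Finset.mem_range]
    exact Or.inl (Or.inl ⟨i, by omega, rfl⟩)
  have hmem' : ∀ i ≤ n', x' i ∈ s := by
    intro i hi
    simp only [hs, Finset.mem_union, Finset.mem_image, Finset.mem_range]
    exact Or.inl (Or.inr ⟨i, by omega, rfl⟩)
  have hα : α ∈ s := by simp [hs]
  have hβ : β ∈ s := by simp [hs]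
  have hlb : ∀ t ∈ s, α ≤ t := by
    intro t ht
    simp only [hs, Finset.mem_union, Finset.mem_image, Finset.mem_range,
      Finset.mem_insert, Finset.mem_singleton] at ht
    rcases ht with (⟨i, hi, rfl⟩ | ⟨i, hi, rfl⟩) | (rfl | rfl)
    · exact (chain_bounds hX i (by omega)).1
    · exact (chain_bounds hX' i (by omega)).1
    · exact le_rfl
    · exact hαβ
  have hub : ∀ t ∈ s, t ≤ β := by
    intro t ht
    simp only [hs, Finset.mem_union, Finset.mem_image, Finset.mem_range,
      Finset.mem_insert, Finset.mem_singleton] at ht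
    rcases ht with (⟨i, hi, rfl⟩ | ⟨i, hi, rfl⟩) | (rfl | rfl)
    · exact (chain_bounds hX i (by omega)).2
    · exact (chain_bounds hX' i (by omega)).2
    · exact hαβ
    · exact le_rfl
  obtain ⟨hZ, d1, d2, d3, d4, d5⟩ := subchain_data s hlb hub hα hβ hX hmem
  obtain ⟨_, e1, e2, e3, e4, e5⟩ := subchain_data s hlb hub hα hβ hX' hmem'
  exact ⟨s.card - 1, zf s, hZ, ⟨fun i => idx s (x i), d1, d2, d3, d4, d5⟩,
    ⟨fun i => idx s (x' i), e1, e2, e3, e4, e5⟩⟩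
/-- For a pointwise finite-dimensional 2-D persistence module `U` and the
slice correspondences `R_{a,b}` along the negatively sloped line `ℓ(x) = (x, c - m·x)`,
one has, for `a ≤ b ≤ c'`: `(v, u) ∈ R_{a,c'}` iff there is `w ∈ U (ℓ b)` with
`(v, w) ∈ R_{a,b}` and `(w, u) ∈ R_{b,c'}`.  Hence the slice is a correspondence module. -/
theorem sliceRel_comp
    [∀ p : ℝ × ℝ, FiniteDimensional k (U p)]
    (hid : ∀ p : ℝ × ℝ, T p p le_rfl = LinearMap.id)
    (hcomp : ∀ (p q r : ℝ × ℝ) (hpq : p ≤ q) (hqr : q ≤ r),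
      (T q r hqr).comp (T p q hpq) = T p r (hpq.trans hqr))
    (hm : 0 < m)
    (a b c' : ℝ) (hab : a ≤ b) (hbc : b ≤ c')
    (v : U (lline m c a)) (u : U (lline m c c')) :
    SliceRel U T m c a c' v u ↔
      ∃ w : U (lline m c b), SliceRel U T m c a b v w ∧ SliceRel U T m c b c' w u := by
  classical
  constructor
  · intro hvu
    have htriv1 : IsChain2 1 (fun i => if i = 0 then a else b) a b := by
      refine ⟨?_, by simp, by simp⟩
      intro i hi
      have hi0 : i = 0 := by omega
      subst hi0
      simp [hab]
    have htriv2 : IsChain2 1 (fun i => if i = 0 then b else c') b c' := by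
      refine ⟨?_, by simp, by simp⟩
      intro i hi
      have hi0 : i = 0 := by omega
      subst hi0
      simp [hbc]
    set ι : Type :=
      {q : ℕ × (ℕ → ℝ) // IsChain2 q.1 q.2 a b} ×
      {q : ℕ × (ℕ → ℝ) // IsChain2 q.1 q.2 b c'} with hι
    haveI : Nonempty ι :=
      ⟨⟨⟨(1, fun i => if i = 0 then a else b), htriv1⟩,
        ⟨(1, fun i => if i = 0 then b else c'), htriv2⟩⟩⟩
    set S : ι → Set (U (lline m c b)) := fun j =>
      {w' | InterpAlong U T m c j.1.1.1 j.1.1.2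
              (castU U m c j.1.2.2.1.symm v) (castU U m c j.1.2.2.2.symm w') ∧
            InterpAlong U T m c j.2.1.1 j.2.1.2
              (castU U m c j.2.2.2.1.symm w') (castU U m c j.2.2.2.2.symm u)} with hSdef
    set M : ι → Submodule k (U (lline m c b)) := fun j =>
      { carrier := {w' | InterpAlong U T m c j.1.1.1 j.1.1.2
              0 (castU U m c j.1.2.2.2.symm w') ∧
            InterpAlong U T m c j.2.1.1 j.2.1.2
              (castU U m c j.2.2.2.1.symm w') 0}
        zero_mem' := by
          refine ⟨?_, ?_⟩
          · rw [castU_zero]; exact interp_zero _ _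
          · rw [castU_zero]; exact interp_zero _ _
        add_mem' := by
          intro w1 w2 h1 h2
          refine ⟨?_, ?_⟩
          · have h3 := interp_add h1.1 h2.1
            rw [add_zero, ← castU_add] at h3
            exact h3
          · have h3 := interp_add h1.2 h2.2
            rw [add_zero, ← castU_add] at h3
            exact h3
        smul_mem' := by
          intro r w' h
          refine ⟨?_, ?_⟩
          · have h3 := interp_smul r h.1
            rw [smul_zero, ← castU_smul] at h3
            exact h3
          · have h3 := interp_smul r h.2
            rw [smul_zero, ← castU_smul] at h3
            exact h3 } with hMdef
    have hS : ∀ j, ∃ w₀, ∀ w', w' ∈ S j ↔ w' - w₀ ∈ M j := by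
      intro j
      obtain ⟨w₀, hw1, hw2⟩ := slice_split hcomp hm.le hvu j.1.2 j.2.2
      refine ⟨w₀, fun w' => ⟨fun hw' => ⟨?_, ?_⟩, fun hmem => ⟨?_, ?_⟩⟩⟩
      · have h3 := interp_vsub hw'.1 hw1
        rw [sub_self, ← castU_sub] at h3
        exact h3
      · have h3 := interp_vsub hw'.2 hw2
        rw [sub_self, ← castU_sub] at h3
        exact h3
      · have h3 := interp_add hw1 hmem.1
        rw [add_zero, ← castU_add, show w₀ + (w' - w₀) = w' from by abel] at h3
        exact h3
      · have h3 := interp_add hw2 hmem.2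
        rw [add_zero, ← castU_add, show w₀ + (w' - w₀) = w' from by abel] at h3
        exact h3
    have hdir : ∀ j j', ∃ j'', S j'' ⊆ S j ∩ S j' := by
      intro j j'
      obtain ⟨N₁, z₁, hZ₁, ⟨g1, hg1a, hg1b, hg1c, hg1d, hg1e⟩,
        ⟨g1', hg1a', hg1b', hg1c', hg1d', hg1e'⟩⟩ := merge_side hab j.1.2 j'.1.2
      obtain ⟨N₂, z₂, hZ₂, ⟨g2, hg2a, hg2b, hg2c, hg2d, hg2e⟩,
        ⟨g2', hg2a', hg2b', hg2c', hg2d', hg2e'⟩⟩ := merge_side hbc j.2.2 j'.2.2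
      refine ⟨⟨⟨(N₁, z₁), hZ₁⟩, ⟨(N₂, z₂), hZ₂⟩⟩, ?_⟩
      intro w' hw'
      constructor
      · exact ⟨interp_through hcomp hm.le hZ₁ j.1.2 g1 hg1a hg1b hg1c hg1d hg1e hw'.1,
          interp_through hcomp hm.le hZ₂ j.2.2 g2 hg2a hg2b hg2c hg2d hg2e hw'.2⟩
      · exact ⟨interp_through hcomp hm.le hZ₁ j'.1.2 g1' hg1a' hg1b' hg1c' hg1d' hg1e' hw'.1,
          interp_through hcomp hm.le hZ₂ j'.2.2 g2' hg2a' hg2b' hg2c' hg2d' hg2e' hw'.2⟩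
    obtain ⟨w, hw⟩ := coset_inter S M hS hdir
    refine ⟨w, ?_, ?_⟩
    · intro n x hmono hx0 hxn
      exact (Set.mem_iInter.mp hw
        ⟨⟨(n, x), hmono, hx0, hxn⟩,
         ⟨(1, fun i => if i = 0 then b else c'), htriv2⟩⟩).1
    · intro n x hmono hx0 hxn
      exact (Set.mem_iInter.mp hw
        ⟨⟨(1, fun i => if i = 0 then a else b), htriv1⟩,
         ⟨(n, x), hmono, hx0, hxn⟩⟩).2
  · rintro ⟨w, hS1, hS2⟩
    intro n x hmono hx0 hxn
    have hX : IsChain2 n x a c' := ⟨hmono, hx0, hxn⟩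
    set s : Finset ℝ := (Finset.range (n + 1)).image x ∪ {a, b, c'} with hs
    have hmem : ∀ i ≤ n, x i ∈ s := by
      intro i hi
      simp only [hs, Finset.mem_union, Finset.mem_image, Finset.mem_range]
      exact Or.inl ⟨i, by omega, rfl⟩
    have hamem : a ∈ s := by simp [hs]
    have hbmem : b ∈ s := by simp [hs]
    have hcmem : c' ∈ s := by simp [hs]
    have hlb : ∀ t ∈ s, a ≤ t := by
      intro t ht
      simp only [hs, Finset.mem_union, Finset.mem_image, Finset.mem_range,
        Finset.mem_insert, Finset.mem_singleton] at ht
      rcases ht with ⟨i, hi, rfl⟩ | (rfl | rfl | rfl)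
      · exact (chain_bounds hX i (by omega)).1
      · exact le_rfl
      · exact hab
      · exact hab.trans hbc
    have hub : ∀ t ∈ s, t ≤ c' := by
      intro t ht
      simp only [hs, Finset.mem_union, Finset.mem_image, Finset.mem_range,
        Finset.mem_insert, Finset.mem_singleton] at ht
      rcases ht with ⟨i, hi, rfl⟩ | (rfl | rfl | rfl)
      · exact (chain_bounds hX i (by omega)).2
      · exact hab.trans hbc
      · exact hbc
      · exact le_rfl
    obtain ⟨hZ, d1, d2, d3, d4, d5⟩ := subchain_data s hlb hub hamem hcmem hX hmem
    exact interp_through hcomp hm.le hZ hX (fun i => SliceMerge.idx s (x i)) d1 d2 d3 d4 d5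
      (slice_concat hS1 hS2 hZ (SliceMerge.idx_le hbmem) (SliceMerge.zf_idx hbmem))

end
end

section
/- Let k be a field and let A_r, A_s, A_t, B_{rs}, B_{st}, B_{rt} be k-vector spaces, with k-linear maps φ_{rs} : A_r → B_{rs}, ψ_{rs} : A_s → B_{rs}, φ_{st} : A_s → B_{st}, ψ_{st} : A_t → B_{st}, φ_{rt} : A_r → B_{rt}, ψ_{rt} : A_t → B_{rt}, ρ : B_{rs} → B_{rt}, σ : B_{st} → B_{rt}. Assume: (1) ρ ∘ φ_{rs} = φ_{rt}; (2) σ ∘ ψ_{st} = ψ_{rt}; (3) ρ ∘ ψ_{rs} = σ ∘ φ_{st}; and (4) exactness of the Mayer–Vietoris diamond: for all b₁ ∈ B_{rs} and b₂ ∈ B_{st} with ρ(b₁) = σ(b₂), there exists a ∈ A_s with ψ_{rs}(a) = b₁ and φ_{st}(a) = b₂. Then for all x ∈ A_r and z ∈ A_t: φ_{rt}(x) = ψ_{rt}(z) if and only if there exists y ∈ A_s with φ_{rs}(x) = ψ_{rs}(y) and φ_{st}(y) = ψ_{st}(z). (This is the composition rule h_r^t = h_s^t ∘ h_r^s for the levelset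 correspondences h_s^t = {(a, b) : φ_{st}(a) = ψ_{st}(b)}, and it shows the levelset homology c-module of a proper map on a locally compact polyhedron is a correspondence module.) -/
/-- composition rule for levelset correspondences: Given the commuting
inclusion-induced maps and the exactness of the Mayer–Vietoris diamond, for all `x ∈ A_r`
and `z ∈ A_t`: `φ_{rt} x = ψ_{rt} z` iff there is `y ∈ A_s` with `φ_{rs} x = ψ_{rs} y` and
`φ_{st} y = ψ_{st} z`.  This is `h_r^t = h_s^t ∘ h_r^s`, showing that the levelset homology
of a proper map on a locally compact polyhedron is a correspondence module. -/
theorem levelset_correspondence_composition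
    (k : Type*) [Field k]
    (Ar As At Brs Bst Brt : Type*)
    [AddCommGroup Ar] [Module k Ar] [AddCommGroup As] [Module k As]
    [AddCommGroup At] [Module k At] [AddCommGroup Brs] [Module k Brs]
    [AddCommGroup Bst] [Module k Bst] [AddCommGroup Brt] [Module k Brt]
    (φrs : Ar →ₗ[k] Brs) (ψrs : As →ₗ[k] Brs)
    (φst : As →ₗ[k] Bst) (ψst : At →ₗ[k] Bst)
    (φrt : Ar →ₗ[k] Brt) (ψrt : At →ₗ[k] Brt)
    (ρ : Brs →ₗ[k] Brt) (σ : Bst →ₗ[k] Brt)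
    (h1 : ρ.comp φrs = φrt)
    (h2 : σ.comp ψst = ψrt)
    (h3 : ρ.comp ψrs = σ.comp φst)
    (hexact : ∀ (b₁ : Brs) (b₂ : Bst), ρ b₁ = σ b₂ →
      ∃ a : As, ψrs a = b₁ ∧ φst a = b₂) :
    ∀ (x : Ar) (z : At),
      φrt x = ψrt z ↔ ∃ y : As, φrs x = ψrs y ∧ φst y = ψst z := by
  intro x z
  have e1 := congrFun (congrArg DFunLike.coe h1) x
  have e2 := congrFun (congrArg DFunLike.coe h2) z
  simp only [LinearMap.comp_apply] at e1 e2
  constructor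
  · intro h
    obtain ⟨a, ha1, ha2⟩ := hexact (φrs x) (ψst z) (by rw [e1, e2, h])
    exact ⟨a, ha1.symm, ha2⟩
  · rintro ⟨y, hy1, hy2⟩
    have e3 := congrFun (congrArg DFunLike.coe h3) y
    simp only [LinearMap.comp_apply] at e3
    rw [← e1, ← e2, hy1, e3, hy2]
end
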